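/- arXiv:1904.08131 — 7 statements merged into one kernel-verified Lean document; each statement's English description precedes it below -/
import Mathlib

section
/- Consider the dynamics X_{t+1} = A X_t + E(σ̄·1 - X_t) where A is an n×n row-stochastic matrix, E = diag(ε₁,...,εₙ) with 0 < εᵢ < 2aᵢᵢ, σ̄ ∈ ℝ, and 1 is the all-ones vector. Then X_t converges to σ̄·1 as t → ∞, and moreover |X_t - σ̄·1|_∞ ≤ ρᵗ |X_0 - σ̄·1|_∞ where ρ = max_i (|aᵢᵢ - εᵢ| + 1 - aᵢᵢ) < 1. -/
open Filter Finset

theorem stmt1 {n : ℕ} [NeZero n] (A : Matrix (Fin n) (Fin n) ℝ) (ε : Fin n → ℝ)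
    (hA : ∀ i j, 0 ≤ A i j) (hrow : ∀ i, ∑ j, A i j = 1)
    (hε : ∀ i, 0 < ε i ∧ ε i < 2 * A i i)
    (σ : ℝ) (X : ℕ → Fin n → ℝ)
    (hdyn : ∀ t, X (t + 1) =
      A.mulVec (X t) + fun i => ε i * (σ - X t i)) :
    (⨆ i, (|A i i - ε i| + 1 - A i i)) < 1 ∧
    (∀ t, ‖X t - fun _ => σ‖ ≤
      (⨆ i, (|A i i - ε i| + 1 - A i i)) ^ t * ‖X 0 - fun _ => σ‖) ∧
    Tendsto X atTop (nhds fun _ => σ) := by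
  have hn : Nonempty (Fin n) := Fin.pos_iff_nonempty.mp (Nat.pos_of_ne_zero (NeZero.ne n))
  set f : Fin n → ℝ := fun i => |A i i - ε i| + 1 - A i i with hf
  set ρ := ⨆ i, f i with hρ
  have hAle : ∀ i, A i i ≤ 1 := by
    intro i
    rw [← hrow i]
    exact Finset.single_le_sum (fun j _ => hA i j) (mem_univ i)
  have hterm_lt : ∀ i, f i < 1 := by
    intro i
    have h1 := (hε i).1
    have h2 := (hε i).2
    have : |A i i - ε i| < A i i := abs_lt.mpr ⟨by linarith, by linarith⟩
    simp only [hf]; linarith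
  have hterm_nonneg : ∀ i, 0 ≤ f i := by
    intro i
    have h1 := abs_nonneg (A i i - ε i)
    have h2 := hAle i
    simp only [hf]; linarith
  obtain ⟨i₀, hi₀⟩ := exists_eq_ciSup_of_finite (f := f)
  have hρlt : ρ < 1 := by rw [hρ, ← hi₀]; exact hterm_lt i₀
  have hρnn : 0 ≤ ρ := by rw [hρ, ← hi₀]; exact hterm_nonneg i₀
  have hbdd : BddAbove (Set.range f) := Set.Finite.bddAbove (Set.finite_range f)
  have hfle : ∀ i, f i ≤ ρ := fun i => le_ciSup hbdd i
  -- key recursion on coordinates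
  have hY : ∀ t i, X (t + 1) i - σ =
      (A i i - ε i) * (X t i - σ) + ∑ j ∈ univ.erase i, A i j * (X t j - σ) := by
    intro t i
    have h := congrFun (hdyn t) i
    simp only [Pi.add_apply, Matrix.mulVec, dotProduct] at h
    have hsplit : ∑ j, A i j * (X t j - σ) =
        A i i * (X t i - σ) + ∑ j ∈ univ.erase i, A i j * (X t j - σ) :=
      (Finset.add_sum_erase univ _ (mem_univ i)).symm
    have hsum : ∑ j, A i j * (X t j - σ) = (∑ j, A i j * X t j) - σ := by
      simp only [mul_sub, Finset.sum_sub_distrib, ← Finset.sum_mul, hrow i, one_mul]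
    rw [h]
    have h2 := hsplit.symm.trans hsum
    linarith [h2]
  have herase : ∀ i, ∑ j ∈ univ.erase i, A i j = 1 - A i i := by
    intro i
    have := (Finset.add_sum_erase univ (A i) (mem_univ i)).symm
    rw [hrow i] at this
    linarith
  -- one step contraction
  have key : ∀ t, ‖X (t + 1) - fun _ => σ‖ ≤ ρ * ‖X t - fun _ => σ‖ := by
    intro t
    have hnn : 0 ≤ ρ * ‖X t - fun _ => σ‖ := mul_nonneg hρnn (norm_nonneg _)
    rw [pi_norm_le_iff_of_nonneg hnn]
    intro i
    simp only [Pi.sub_apply, Real.norm_eq_abs, hY t i]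
    have hb : ∀ j, |X t j - σ| ≤ ‖X t - fun _ => σ‖ := by
      intro j
      have := norm_le_pi_norm (X t - fun _ => σ) j
      simpa [Real.norm_eq_abs] using this
    calc |(A i i - ε i) * (X t i - σ) + ∑ j ∈ univ.erase i, A i j * (X t j - σ)|
        ≤ |(A i i - ε i) * (X t i - σ)| + |∑ j ∈ univ.erase i, A i j * (X t j - σ)| :=
          abs_add_le _ _
      _ ≤ |A i i - ε i| * |X t i - σ| + ∑ j ∈ univ.erase i, |A i j * (X t j - σ)| := by
          rw [abs_mul]
          exact add_le_add_right (Finset.abs_sum_le_sum_abs _ _) _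
      _ ≤ |A i i - ε i| * ‖X t - fun _ => σ‖ +
            ∑ j ∈ univ.erase i, A i j * ‖X t - fun _ => σ‖ := by
          apply add_le_add
          · exact mul_le_mul_of_nonneg_left (hb i) (abs_nonneg _)
          · apply Finset.sum_le_sum
            intro j _
            rw [abs_mul, abs_of_nonneg (hA i j)]
            exact mul_le_mul_of_nonneg_left (hb j) (hA i j)
      _ = f i * ‖X t - fun _ => σ‖ := by
          rw [← Finset.sum_mul, herase i, hf]; ring
      _ ≤ ρ * ‖X t - fun _ => σ‖ :=
          mul_le_mul_of_nonneg_right (hfle i) (norm_nonneg _)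
  -- power bound
  have hpow : ∀ t, ‖X t - fun _ => σ‖ ≤ ρ ^ t * ‖X 0 - fun _ => σ‖ := by
    intro t
    induction t with
    | zero => simp
    | succ t ih =>
      calc ‖X (t + 1) - fun _ => σ‖ ≤ ρ * ‖X t - fun _ => σ‖ := key t
        _ ≤ ρ * (ρ ^ t * ‖X 0 - fun _ => σ‖) := mul_le_mul_of_nonneg_left ih hρnn
        _ = ρ ^ (t + 1) * ‖X 0 - fun _ => σ‖ := by ring
  refine ⟨hρlt, hpow, ?_⟩
  rw [tendsto_iff_norm_sub_tendsto_zero]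
  have hlim : Tendsto (fun t => ρ ^ t * ‖X 0 - fun _ => σ‖) atTop (nhds 0) := by
    have := (tendsto_pow_atTop_nhds_zero_of_lt_one hρnn hρlt).mul_const ‖X 0 - fun _ => σ‖
    simpa using this
  exact squeeze_zero (fun t => norm_nonneg _) hpow hlim
end

section
/- Let (ρ_t) be nonnegative reals with sup_{t≥1} (ρ_t + ρ_t ρ_{t-1} + ... + ρ_t⋯ρ_1) < ∞, and let (u_n)_{n≥1} be a random sequence with u_n → 0 in probability and P(sup_n |u_n| < ∞) = 1. Then Σ_{i=1}^t ρ_t ρ_{t-1} ⋯ ρ_{t-i+1} u_{t-i} → 0 in probability as t → ∞. -/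
open Filter Finset MeasureTheory

lemma aux_As_nonneg (ρ : ℕ → ℝ) (hρ : ∀ t, 0 ≤ ρ t) (As : ℝ)
    (hsup : ∀ t ≥ 1, ∑ k ∈ Finset.Icc 1 t, ∏ i ∈ Finset.Ioc (t - k) t, ρ i ≤ As) :
    0 ≤ As := by
  refine le_trans ?_ (hsup 1 le_rfl)
  exact Finset.sum_nonneg fun k _ => Finset.prod_nonneg fun i _ => hρ i

lemma aux_prod_bound (ρ : ℕ → ℝ) (hρ : ∀ t, 0 ≤ ρ t) (As : ℝ)
    (hsup : ∀ t ≥ 1, ∑ k ∈ Finset.Icc 1 t, ∏ i ∈ Finset.Ioc (t - k) t, ρ i ≤ As)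
    (b t : ℕ) (ht : b + 2 ≤ t) :
    ∏ j ∈ Finset.Ioc b t, ρ j ≤ As * As / ((t : ℝ) - b - 1) := by
  have hAs := aux_As_nonneg ρ hρ As hsup
  have hden : (1 : ℝ) ≤ (t : ℝ) - b - 1 := by
    have : (b : ℝ) + 2 ≤ t := by exact_mod_cast ht
    linarith
  have hden0 : (0 : ℝ) < (t : ℝ) - b - 1 := by linarith
  by_cases hz : ∃ j ∈ Finset.Ioc b t, ρ j = 0
  · obtain ⟨j, hj, hj0⟩ := hz
    rw [Finset.prod_eq_zero hj hj0]
    positivity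
  push_neg at hz
  have hpos : ∀ j ∈ Finset.Ioc b t, 0 < ρ j := fun j hj => (hρ j).lt_of_ne' (hz j hj)
  set P := ∏ j ∈ Finset.Ioc b t, ρ j with hP
  have hPnn : 0 ≤ P := Finset.prod_nonneg fun i _ => hρ i
  -- Q s ≤ As for s ∈ Icc (b+1) (t-1)
  have hQ : ∀ s ∈ Finset.Icc (b+1) (t-1), ∏ j ∈ Finset.Ioc b s, ρ j ≤ As := by
    intro s hs
    simp only [Finset.mem_Icc] at hs
    refine le_trans ?_ (hsup s (le_trans (Nat.le_add_left 1 b) hs.1))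
    have hmem : (s - b) ∈ Finset.Icc 1 s := by
      simp only [Finset.mem_Icc]
      exact ⟨Nat.le_sub_of_add_le (by omega), Nat.sub_le s b⟩
    have : ∏ j ∈ Finset.Ioc (s - (s - b)) s, ρ j = ∏ j ∈ Finset.Ioc b s, ρ j := by
      have h : s - (s - b) = b := by omega
      rw [h]
    rw [← this]
    exact Finset.single_le_sum (f := fun k => ∏ i ∈ Finset.Ioc (s - k) s, ρ i)
      (fun k _ => Finset.prod_nonneg fun i _ => hρ i) hmem
  have hQpos : ∀ s ∈ Finset.Icc (b+1) (t-1), 0 < ∏ j ∈ Finset.Ioc b s, ρ j := by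
    intro s hs
    simp only [Finset.mem_Icc] at hs
    exact Finset.prod_pos fun j hj => hpos j (by simp only [Finset.mem_Ioc] at hj ⊢; omega)
  have hAspos : 0 < As := lt_of_lt_of_le (hQpos (b+1) (by simp only [Finset.mem_Icc]; omega)) (hQ (b+1) (by simp only [Finset.mem_Icc]; omega))
  -- each tail ∏_{Ioc s t} = P / Q s ≥ P / As
  have htail : ∀ s ∈ Finset.Icc (b+1) (t-1), P / As ≤ ∏ j ∈ Finset.Ioc s t, ρ j := by
    intro s hs
    have hs' := hs
    simp only [Finset.mem_Icc] at hs'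
    have hsplit : (∏ j ∈ Finset.Ioc b s, ρ j) * ∏ j ∈ Finset.Ioc s t, ρ j = P := by
      rw [hP]
      exact Finset.prod_Ioc_consecutive ρ (by omega) (by omega)
    have hq := hQpos s hs
    have htnn : 0 ≤ ∏ j ∈ Finset.Ioc s t, ρ j := Finset.prod_nonneg fun i _ => hρ i
    rw [div_le_iff₀ hAspos]
    calc P = (∏ j ∈ Finset.Ioc b s, ρ j) * ∏ j ∈ Finset.Ioc s t, ρ j := hsplit.symm
    _ ≤ As * ∏ j ∈ Finset.Ioc s t, ρ j := mul_le_mul_of_nonneg_right (hQ s hs) htnn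
    _ = (∏ j ∈ Finset.Ioc s t, ρ j) * As := mul_comm _ _
  -- sum of tails ≤ As
  have hsum : ∑ s ∈ Finset.Icc (b+1) (t-1), ∏ j ∈ Finset.Ioc s t, ρ j ≤ As := by
    have hre : ∑ s ∈ Finset.Icc (b+1) (t-1), ∏ j ∈ Finset.Ioc s t, ρ j
        = ∑ k ∈ Finset.Icc 1 (t-1-b), ∏ j ∈ Finset.Ioc (t-k) t, ρ j := by
      refine Finset.sum_nbij' (fun s => t - s) (fun k => t - k) ?_ ?_ ?_ ?_ ?_
      · intro s hs; simp only [Finset.mem_Icc] at hs ⊢; omega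
      · intro k hk; simp only [Finset.mem_Icc] at hk ⊢; omega
      · intro s hs; simp only [Finset.mem_Icc] at hs; omega
      · intro k hk; simp only [Finset.mem_Icc] at hk; omega
      · intro s hs; simp only [Finset.mem_Icc] at hs
        have h : t - (t - s) = s := by omega
        rw [h]
    rw [hre]
    refine le_trans (Finset.sum_le_sum_of_subset_of_nonneg ?_ ?_) (hsup t (by omega))
    · apply Finset.Icc_subset_Icc_right; omega
    · intro k _ _; exact Finset.prod_nonneg fun i _ => hρ i
  have hcard : (Finset.Icc (b+1) (t-1)).card = t - 1 - b := by
    rw [Nat.card_Icc]; omega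
  have hlb : ((t : ℝ) - b - 1) * (P / As) ≤ ∑ s ∈ Finset.Icc (b+1) (t-1), ∏ j ∈ Finset.Ioc s t, ρ j := by
    have := Finset.card_nsmul_le_sum (Finset.Icc (b+1) (t-1)) (fun s => ∏ j ∈ Finset.Ioc s t, ρ j) (P / As) htail
    rw [hcard] at this
    have hc : ((t - 1 - b : ℕ) : ℝ) = (t : ℝ) - b - 1 := by
      have h1 : (b:ℝ) + 2 ≤ t := by exact_mod_cast ht
      push_cast [Nat.cast_sub (by omega : b ≤ t - 1), Nat.cast_sub (by omega : 1 ≤ t)]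
      ring
    rw [nsmul_eq_mul, hc] at this
    exact this
  have : ((t : ℝ) - b - 1) * (P / As) ≤ As := le_trans hlb hsum
  have h2 : ((t : ℝ) - b - 1) * (P / As) * As ≤ As * As :=
    mul_le_mul_of_nonneg_right this hAspos.le
  rw [mul_assoc, div_mul_cancel₀ _ hAspos.ne'] at h2
  rw [le_div_iff₀ hden0]
  nlinarith [h2]

lemma aux_prod_tendsto (ρ : ℕ → ℝ) (hρ : ∀ t, 0 ≤ ρ t) (As : ℝ)
    (hsup : ∀ t ≥ 1, ∑ k ∈ Finset.Icc 1 t, ∏ i ∈ Finset.Ioc (t - k) t, ρ i ≤ As)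
    (b : ℕ) :
    Tendsto (fun t => ∏ j ∈ Finset.Ioc b t, ρ j) atTop (nhds 0) := by
  have hub : Tendsto (fun t : ℕ => As * As / ((t : ℝ) - b - 1)) atTop (nhds 0) := by
    apply Tendsto.div_atTop (tendsto_const_nhds)
    have : Tendsto (fun t : ℕ => (t : ℝ)) atTop atTop := tendsto_natCast_atTop_atTop
    have := Filter.tendsto_atTop_add_const_right atTop (-(b : ℝ) - 1) this
    refine this.congr fun t => by ring
  refine squeeze_zero' ?_ ?_ hub
  · exact Filter.Eventually.of_forall fun t => Finset.prod_nonneg fun i _ => hρ i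
  · filter_upwards [Filter.eventually_ge_atTop (b + 2)] with t ht
    exact aux_prod_bound ρ hρ As hsup b t ht

lemma aux_B_tendsto (ρ : ℕ → ℝ) (hρ : ∀ t, 0 ≤ ρ t) (As : ℝ)
    (hsup : ∀ t ≥ 1, ∑ k ∈ Finset.Icc 1 t, ∏ i ∈ Finset.Ioc (t - k) t, ρ i ≤ As)
    (g : ℕ → ENNReal) (hg1 : ∀ n, g n ≤ 1) (hg0 : Tendsto g atTop (nhds 0)) :
    Tendsto (fun t => ∑ i ∈ Finset.Icc 1 t,
      ENNReal.ofReal (∏ j ∈ Finset.Ioc (t - i) t, ρ j) * g (t - i)) atTop (nhds 0) := by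
  have hAs := aux_As_nonneg ρ hρ As hsup
  rw [ENNReal.tendsto_nhds_zero]
  intro c hc
  set c' : ENNReal := min c 1 with hc'
  have hc'0 : c' ≠ 0 := (lt_min hc zero_lt_one).ne'
  have hc'top : c' ≠ ⊤ := ne_top_of_le_ne_top ENNReal.one_ne_top (min_le_right c 1)
  have hhalftop : c' / 2 ≠ ⊤ := ne_top_of_le_ne_top hc'top ENNReal.half_le_self
  have hc'c : c' ≤ c := min_le_left c 1
  set D : ENNReal := ENNReal.ofReal As + 1 with hD
  have hD0 : D ≠ 0 := by simp [hD]
  have hDtop : D ≠ ⊤ := by simp [hD]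
  set γ : ENNReal := c' / 2 / D with hγ
  have hγ0 : 0 < γ := ENNReal.div_pos (by simp [ENNReal.div_eq_top, hc'0, hc'top]) hDtop
  -- choose N with g n ≤ γ for n ≥ N
  obtain ⟨N, hN⟩ := (Filter.eventually_atTop).mp (ENNReal.tendsto_nhds_zero.mp hg0 γ hγ0)
  -- F t → 0
  have hF : Tendsto (fun t => ∑ b ∈ Finset.range N, ∏ j ∈ Finset.Ioc b t, ρ j)
      atTop (nhds 0) := by
    have := tendsto_finset_sum (Finset.range N)
      (fun b _ => aux_prod_tendsto ρ hρ As hsup b)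
    simpa using this
  have hhalf0 : (0:ℝ) < (c'/2).toReal := by
    refine ENNReal.toReal_pos ?_ ?_
    · simp [ENNReal.div_eq_zero_iff, hc'0]
    · exact hhalftop
  filter_upwards [Filter.eventually_ge_atTop (N + 1),
    hF.eventually_lt_const hhalf0] with t ht hFt
  have ht1 : 1 ≤ t := by omega
  -- rewrite index set and split
  have hsplit : ∑ i ∈ Finset.Icc 1 t,
      ENNReal.ofReal (∏ j ∈ Finset.Ioc (t - i) t, ρ j) * g (t - i)
      = (∑ i ∈ Finset.Ioc 0 (t - N),
          ENNReal.ofReal (∏ j ∈ Finset.Ioc (t - i) t, ρ j) * g (t - i))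
      + ∑ i ∈ Finset.Ioc (t - N) t,
          ENNReal.ofReal (∏ j ∈ Finset.Ioc (t - i) t, ρ j) * g (t - i) := by
    have hIcc : Finset.Icc 1 t = Finset.Ioc 0 t := by
      ext x; simp only [Finset.mem_Icc, Finset.mem_Ioc]; omega
    rw [hIcc]
    exact (Finset.sum_Ioc_consecutive _ (Nat.zero_le _) (Nat.sub_le t N)).symm
  rw [hsplit]
  have hpart1 : ∑ i ∈ Finset.Ioc 0 (t - N),
      ENNReal.ofReal (∏ j ∈ Finset.Ioc (t - i) t, ρ j) * g (t - i) ≤ c' / 2 := by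
    calc ∑ i ∈ Finset.Ioc 0 (t - N),
        ENNReal.ofReal (∏ j ∈ Finset.Ioc (t - i) t, ρ j) * g (t - i)
        ≤ ∑ i ∈ Finset.Ioc 0 (t - N),
          ENNReal.ofReal (∏ j ∈ Finset.Ioc (t - i) t, ρ j) * γ := by
          refine Finset.sum_le_sum fun i hi => ?_
          refine mul_le_mul_right (hN (t - i) ?_) _
          simp only [Finset.mem_Ioc] at hi
          omega
      _ = (∑ i ∈ Finset.Ioc 0 (t - N),
            ENNReal.ofReal (∏ j ∈ Finset.Ioc (t - i) t, ρ j)) * γ := by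
          rw [Finset.sum_mul]
      _ ≤ D * γ := by
          refine mul_le_mul_left ?_ γ
          rw [← ENNReal.ofReal_sum_of_nonneg
            (fun i _ => Finset.prod_nonneg fun j _ => hρ j)]
          refine le_trans (ENNReal.ofReal_le_ofReal ?_) (le_self_add : ENNReal.ofReal As ≤ D)
          refine le_trans (Finset.sum_le_sum_of_subset_of_nonneg ?_
            (fun i _ _ => Finset.prod_nonneg fun j _ => hρ j)) (hsup t ht1)
          intro x hx
          simp only [Finset.mem_Ioc] at hx
          simp only [Finset.mem_Icc]
          omega
      _ = c' / 2 := by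
          rw [hγ, ENNReal.mul_div_cancel hD0 hDtop]
  have hpart2 : ∑ i ∈ Finset.Ioc (t - N) t,
      ENNReal.ofReal (∏ j ∈ Finset.Ioc (t - i) t, ρ j) * g (t - i) ≤ c' / 2 := by
    calc ∑ i ∈ Finset.Ioc (t - N) t,
        ENNReal.ofReal (∏ j ∈ Finset.Ioc (t - i) t, ρ j) * g (t - i)
        ≤ ∑ i ∈ Finset.Ioc (t - N) t,
          ENNReal.ofReal (∏ j ∈ Finset.Ioc (t - i) t, ρ j) := by
          refine Finset.sum_le_sum fun i hi => ?_
          exact mul_le_of_le_one_right' (hg1 (t - i))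
      _ = ENNReal.ofReal (∑ i ∈ Finset.Ioc (t - N) t, ∏ j ∈ Finset.Ioc (t - i) t, ρ j) :=
          (ENNReal.ofReal_sum_of_nonneg
            (fun i _ => Finset.prod_nonneg fun j _ => hρ j)).symm
      _ = ENNReal.ofReal (∑ b ∈ Finset.range N, ∏ j ∈ Finset.Ioc b t, ρ j) := by
          congr 1
          refine Finset.sum_nbij' (fun i => t - i) (fun b => t - b) ?_ ?_ ?_ ?_ ?_
          · intro i hi; simp only [Finset.mem_Ioc] at hi; simp only [Finset.mem_range]; omega
          · intro b hb; simp only [Finset.mem_range] at hb; simp only [Finset.mem_Ioc]; omega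
          · intro i hi; simp only [Finset.mem_Ioc] at hi; omega
          · intro b hb; simp only [Finset.mem_range] at hb; omega
          · intro i hi; rfl
      _ ≤ c' / 2 := by
          refine le_trans (ENNReal.ofReal_le_ofReal hFt.le) ?_
          rw [ENNReal.ofReal_toReal hhalftop]
  calc _ ≤ c' / 2 + c' / 2 := add_le_add hpart1 hpart2
    _ = c' := ENNReal.add_halves c'
    _ ≤ c := hc'c

lemma aux_g_tendsto {Ω : Type*} [MeasurableSpace Ω] (μ : Measure Ω) [IsProbabilityMeasure μ]
    (u : ℕ → Ω → ℝ) (hmeas : ∀ m, Measurable (u m))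
    (hu : TendstoInMeasure μ u atTop (fun _ => 0)) :
    Tendsto (fun n => ∫⁻ ω, ENNReal.ofReal (min |u n ω| 1) ∂μ) atTop (nhds 0) := by
  rw [ENNReal.tendsto_nhds_zero]
  intro ε hε
  have hhalf : (0:ENNReal) < ε / 2 := ENNReal.div_pos hε.ne' (by norm_num)
  set ε' := min (ε / 2) 1 with hε'
  have hε'0 : ε' ≠ 0 := (lt_min hhalf zero_lt_one).ne'
  have hε'top : ε' ≠ ⊤ := ne_top_of_le_ne_top ENNReal.one_ne_top (min_le_right _ _)
  set η := ε'.toReal with hη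
  have hη0 : 0 < η := ENNReal.toReal_pos hε'0 hε'top
  have hofη : ENNReal.ofReal η = ε' := ENNReal.ofReal_toReal hε'top
  have key := (tendstoInMeasure_iff_dist.mp hu) η hη0
  simp only [dist_zero_right, Real.norm_eq_abs] at key
  have hev := ENNReal.tendsto_nhds_zero.mp key (ε / 2) hhalf
  filter_upwards [hev] with n hn
  have hset : MeasurableSet {x | η ≤ |u n x|} :=
    measurableSet_le measurable_const (hmeas n).abs
  have hpt : ∀ ω, ENNReal.ofReal (min |u n ω| 1)
      ≤ ENNReal.ofReal η + ({x | η ≤ |u n x|}).indicator (fun _ => (1:ENNReal)) ω := by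
    intro ω
    rcases le_or_gt η (|u n ω|) with h | h
    · have hind : ({x | η ≤ |u n x|}).indicator (fun _ => (1:ENNReal)) ω = 1 :=
        by simp only [Set.indicator_apply, Set.mem_setOf_eq, if_pos h]
      rw [hind]
      refine le_trans ?_ le_add_self
      calc ENNReal.ofReal (min |u n ω| 1) ≤ ENNReal.ofReal 1 :=
            ENNReal.ofReal_le_ofReal (min_le_right _ _)
        _ = 1 := by simp
    · refine le_trans ?_ le_self_add
      refine ENNReal.ofReal_le_ofReal (le_trans (min_le_left _ _) h.le)
  calc ∫⁻ ω, ENNReal.ofReal (min |u n ω| 1) ∂μ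
      ≤ ∫⁻ ω, (ENNReal.ofReal η
          + ({x | η ≤ |u n x|}).indicator (fun _ => (1:ENNReal)) ω) ∂μ :=
        lintegral_mono hpt
    _ = ENNReal.ofReal η * μ Set.univ + μ {x | η ≤ |u n x|} := by
        rw [lintegral_add_left measurable_const, lintegral_const,
          lintegral_indicator hset]
        simp
    _ ≤ ε / 2 + ε / 2 := by
        rw [measure_univ, mul_one, hofη]
        exact add_le_add (min_le_left _ _) hn
    _ = ε := ENNReal.add_halves ε

theorem stmt5 {Ω : Type*} [MeasurableSpace Ω] (μ : Measure Ω) [IsProbabilityMeasure μ]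
    (ρ : ℕ → ℝ) (hρ : ∀ t, 0 ≤ ρ t) (As : ℝ)
    (hsup : ∀ t ≥ 1, ∑ k ∈ Finset.Icc 1 t, ∏ i ∈ Finset.Ioc (t - k) t, ρ i ≤ As)
    (u : ℕ → Ω → ℝ) (hmeas : ∀ m, Measurable (u m))
    (hu : TendstoInMeasure μ u atTop (fun _ => 0))
    (hbdd : ∀ᵐ ω ∂μ, ∃ M, ∀ m, |u m ω| ≤ M) :
    TendstoInMeasure μ
      (fun t ω => ∑ i ∈ Finset.Icc 1 t, (∏ j ∈ Finset.Ioc (t - i) t, ρ j) * u (t - i) ω)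
      atTop (fun _ => 0) := by
  have hvmeas : ∀ n, Measurable (fun ω => min |u n ω| 1) :=
    fun n => (hmeas n).abs.min measurable_const
  set g : ℕ → ENNReal := fun n => ∫⁻ ω, ENNReal.ofReal (min |u n ω| 1) ∂μ with hgdef
  have hg1 : ∀ n, g n ≤ 1 := by
    intro n
    calc g n ≤ ∫⁻ _, 1 ∂μ := by
          refine lintegral_mono fun ω => ?_
          calc ENNReal.ofReal (min |u n ω| 1) ≤ ENNReal.ofReal 1 :=
                ENNReal.ofReal_le_ofReal (min_le_right _ _)
            _ = 1 := by simp
      _ = 1 := by simp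
  have hg0 : Tendsto g atTop (nhds 0) := aux_g_tendsto μ u hmeas hu
  have hB := aux_B_tendsto ρ hρ As hsup g hg1 hg0
  -- the boundedness events
  set A : ℕ → Set Ω := fun M => {ω | ∀ m, |u m ω| ≤ M} with hAdef
  have hAmeas : ∀ M, MeasurableSet (A M) := by
    intro M
    have hAeq : A M = ⋂ m, {ω | |u m ω| ≤ (M:ℝ)} := by
      ext ω; simp [hAdef, Set.mem_iInter]
    rw [hAeq]
    exact MeasurableSet.iInter fun m => measurableSet_le (hmeas m).abs measurable_const
  have hAcompl : Tendsto (fun M => μ (A M)ᶜ) atTop (nhds 0) := by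
    have hanti : Antitone (fun M => (A M)ᶜ) := by
      intro M M' h
      refine Set.compl_subset_compl.mpr fun ω hω m => le_trans (hω m) ?_
      exact_mod_cast Nat.cast_le.mpr h
    have h0 : μ (⋂ M, (A M)ᶜ) = 0 := by
      have hae : ∀ᵐ ω ∂μ, ω ∈ ⋃ M, A M := by
        filter_upwards [hbdd] with ω hω
        obtain ⟨M, hM⟩ := hω
        exact Set.mem_iUnion.mpr ⟨⌈M⌉₊, fun m => le_trans (hM m) (Nat.le_ceil M)⟩
      have h2 := ae_iff.mp hae
      have h3 : (⋂ M, (A M)ᶜ) = {a | ¬ a ∈ ⋃ M, A M} := by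
        ext ω; simp
      rw [h3]; exact h2
    have hlim := tendsto_measure_iInter_atTop
      (s := fun M => (A M)ᶜ)
      (fun M => (hAmeas M).compl.nullMeasurableSet) hanti ⟨0, measure_ne_top μ _⟩
    rw [h0] at hlim
    exact hlim
  -- main argument
  rw [tendstoInMeasure_iff_dist]
  intro ε hε
  simp only [dist_zero_right, Real.norm_eq_abs, sub_zero]
  rw [ENNReal.tendsto_nhds_zero]
  intro δ hδ
  set δ' := min δ 1 with hδ'
  have hδ'0 : δ' ≠ 0 := (lt_min hδ zero_lt_one).ne'
  have hδ'half : (0:ENNReal) < δ' / 2 := ENNReal.div_pos hδ'0 (by norm_num)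
  obtain ⟨M, hM1, hMle⟩ : ∃ M : ℕ, 1 ≤ M ∧ μ (A M)ᶜ ≤ δ' / 2 := by
    obtain ⟨M0, h⟩ := (Filter.eventually_atTop).mp
      (ENNReal.tendsto_nhds_zero.mp hAcompl (δ' / 2) hδ'half)
    exact ⟨max M0 1, le_max_right _ _, h _ (le_max_left _ _)⟩
  have hMpos : (0:ℝ) < M := by exact_mod_cast hM1
  have hM1' : (1:ℝ) ≤ M := by exact_mod_cast hM1
  set c : ENNReal := ENNReal.ofReal (ε / M) with hcdef
  have hc0 : c ≠ 0 := (ENNReal.ofReal_pos.mpr (div_pos hε hMpos)).ne'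
  have hctop : c ≠ ⊤ := ENNReal.ofReal_ne_top
  have hBev := ENNReal.tendsto_nhds_zero.mp hB ((δ' / 2) * c)
    (ENNReal.mul_pos hδ'half.ne' hc0)
  filter_upwards [hBev] with t hBt
  set S : Ω → ℝ := fun ω => ∑ i ∈ Finset.Icc 1 t, (∏ j ∈ Finset.Ioc (t - i) t, ρ j) * u (t - i) ω with hSdef
  set T : Ω → ℝ := fun ω => ∑ i ∈ Finset.Icc 1 t, (∏ j ∈ Finset.Ioc (t - i) t, ρ j) * min |u (t - i) ω| 1 with hTdef
  have hTnn : ∀ ω, 0 ≤ T ω := by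
    intro ω
    refine Finset.sum_nonneg fun i _ => mul_nonneg (Finset.prod_nonneg fun j _ => hρ j) ?_
    exact le_min (abs_nonneg _) zero_le_one
  -- inclusion
  have hincl : {x | ε ≤ |S x|} ⊆ (A M)ᶜ ∪ {x | c ≤ ENNReal.ofReal (T x)} := by
    intro ω hω
    by_cases hmem : ω ∈ A M
    · right
      have hST : |S ω| ≤ (M:ℝ) * T ω := by
        calc |S ω| ≤ ∑ i ∈ Finset.Icc 1 t,
              |(∏ j ∈ Finset.Ioc (t - i) t, ρ j) * u (t - i) ω| :=
              Finset.abs_sum_le_sum_abs _ _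
          _ ≤ ∑ i ∈ Finset.Icc 1 t, (∏ j ∈ Finset.Ioc (t - i) t, ρ j)
              * ((M:ℝ) * min |u (t - i) ω| 1) := by
              refine Finset.sum_le_sum fun i _ => ?_
              have hwnn : 0 ≤ ∏ j ∈ Finset.Ioc (t - i) t, ρ j :=
                Finset.prod_nonneg fun j _ => hρ j
              rw [abs_mul, abs_of_nonneg hwnn]
              refine mul_le_mul_of_nonneg_left ?_ hwnn
              have ha : |u (t - i) ω| ≤ (M:ℝ) := hmem (t - i)
              have hann : 0 ≤ |u (t - i) ω| := abs_nonneg _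
              rcases le_total (|u (t - i) ω|) 1 with h | h
              · rw [min_eq_left h]; nlinarith
              · rw [min_eq_right h]; linarith
          _ = (M:ℝ) * T ω := by
              rw [hTdef, Finset.mul_sum]
              exact Finset.sum_congr rfl fun i _ => by ring
      have hεT : ε / M ≤ T ω := by
        rw [div_le_iff₀ hMpos]
        have : ε ≤ |S ω| := hω
        nlinarith [hST]
      exact ENNReal.ofReal_le_ofReal hεT
    · left; exact hmem
  -- Markov
  have hTmeas : Measurable T := by
    refine Finset.measurable_sum _ fun i _ => ?_
    exact (hvmeas (t - i)).const_mul _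
  have hlint : ∫⁻ ω, ENNReal.ofReal (T ω) ∂μ
      = ∑ i ∈ Finset.Icc 1 t,
        ENNReal.ofReal (∏ j ∈ Finset.Ioc (t - i) t, ρ j) * g (t - i) := by
    have hpt : ∀ ω, ENNReal.ofReal (T ω) = ∑ i ∈ Finset.Icc 1 t,
        ENNReal.ofReal (∏ j ∈ Finset.Ioc (t - i) t, ρ j)
          * ENNReal.ofReal (min |u (t - i) ω| 1) := by
      intro ω
      rw [hTdef]
      rw [ENNReal.ofReal_sum_of_nonneg (fun i _ => mul_nonneg
        (Finset.prod_nonneg fun j _ => hρ j) (le_min (abs_nonneg _) zero_le_one))]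
      exact Finset.sum_congr rfl fun i _ =>
        ENNReal.ofReal_mul (Finset.prod_nonneg fun j _ => hρ j)
    calc ∫⁻ ω, ENNReal.ofReal (T ω) ∂μ
        = ∫⁻ ω, ∑ i ∈ Finset.Icc 1 t,
          ENNReal.ofReal (∏ j ∈ Finset.Ioc (t - i) t, ρ j)
            * ENNReal.ofReal (min |u (t - i) ω| 1) ∂μ := by
          exact lintegral_congr hpt
      _ = ∑ i ∈ Finset.Icc 1 t, ∫⁻ ω,
          ENNReal.ofReal (∏ j ∈ Finset.Ioc (t - i) t, ρ j)
            * ENNReal.ofReal (min |u (t - i) ω| 1) ∂μ := by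
          refine lintegral_finset_sum _ fun i _ => ?_
          exact ((hvmeas (t - i)).ennreal_ofReal).const_mul _
      _ = ∑ i ∈ Finset.Icc 1 t,
          ENNReal.ofReal (∏ j ∈ Finset.Ioc (t - i) t, ρ j) * g (t - i) := by
          refine Finset.sum_congr rfl fun i _ => ?_
          rw [lintegral_const_mul _ ((hvmeas (t - i)).ennreal_ofReal)]
  have hmarkov : μ {x | c ≤ ENNReal.ofReal (T x)}
      ≤ (∑ i ∈ Finset.Icc 1 t,
        ENNReal.ofReal (∏ j ∈ Finset.Ioc (t - i) t, ρ j) * g (t - i)) / c := by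
    rw [← hlint]
    exact meas_ge_le_lintegral_div (hTmeas.ennreal_ofReal).aemeasurable hc0 hctop
  calc μ {x | ε ≤ |S x|} ≤ μ ((A M)ᶜ ∪ {x | c ≤ ENNReal.ofReal (T x)}) :=
        measure_mono hincl
    _ ≤ μ (A M)ᶜ + μ {x | c ≤ ENNReal.ofReal (T x)} := measure_union_le _ _
    _ ≤ δ' / 2 + (∑ i ∈ Finset.Icc 1 t,
        ENNReal.ofReal (∏ j ∈ Finset.Ioc (t - i) t, ρ j) * g (t - i)) / c :=
        add_le_add hMle hmarkov
    _ ≤ δ' / 2 + δ' / 2 := add_le_add le_rfl (ENNReal.div_le_of_le_mul hBt)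
    _ = δ' := ENNReal.add_halves δ'
    _ ≤ δ := min_le_left _ _
end

section
/- Consider Y_t = (A_t - E_t) Y_{t-1} + E_t γ_t in ℝⁿ, where A_t are row-stochastic matrices, E_t = diag((ε_t)₁,...,(ε_t)ₙ), ρ_t = max_i (|(a_t)ᵢᵢ - (ε_t)ᵢ| + 1 - (a_t)ᵢᵢ), and sup_{t≥1}(ρ_t + ρ_tρ_{t-1} + ... + ρ_t⋯ρ_1) < ∞. If |γ_t|_∞ → 0 almost surely, then |Y_t|_∞ → 0 almost surely. -/
open Filter Finset MeasureTheory

lemma auxReindex (ρ : ℕ → ℝ) (t : ℕ) :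
    ∑ j ∈ Finset.Ico 0 t, ∏ i ∈ Finset.Ioc j t, ρ i
      = ∑ m ∈ Finset.Icc 1 t, ∏ i ∈ Finset.Ioc (t - m) t, ρ i := by
  refine Finset.sum_nbij' (fun j => t - j) (fun m => t - m) ?_ ?_ ?_ ?_ ?_ <;>
      intro a ha <;> simp only [Finset.mem_Ico, Finset.mem_Icc] at ha ⊢
  · omega
  · omega
  · omega
  · omega
  · have : t - (t - a) = a := by omega
    rw [this]

lemma auxProdTendsto (ρ : ℕ → ℝ) (hρ : ∀ i, 0 ≤ ρ i) (As : ℝ)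
    (hP : ∀ t, 1 ≤ t → ∑ j ∈ Finset.Ico 0 t, ∏ i ∈ Finset.Ioc j t, ρ i ≤ As) (k : ℕ) :
    Tendsto (fun t => ∏ i ∈ Finset.Ioc k t, ρ i) atTop (nhds 0) := by
  have hprodnn : ∀ a b : ℕ, 0 ≤ ∏ i ∈ Finset.Ioc a b, ρ i := fun a b =>
    Finset.prod_nonneg fun i _ => hρ i
  have hAs : 0 ≤ As := le_trans (by simpa using hρ 1) (by simpa using hP 1 le_rfl)
  have hB : (0:ℝ) < As + 1 := by linarith
  -- single product bound: for a < b, ∏ Ioc a b ≤ As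
  have hsingle : ∀ a b : ℕ, a < b → ∏ i ∈ Finset.Ioc a b, ρ i ≤ As := by
    intro a b hab
    refine le_trans (Finset.single_le_sum (f := fun j => ∏ i ∈ Finset.Ioc j b, ρ i)
      (fun j _ => hprodnn j b) (by simp [Finset.mem_Ico]; omega)) (hP b (by omega))
  rw [Metric.tendsto_atTop]
  intro e he
  refine ⟨k + 2 + ⌈As * (As + 1) / e⌉₊, fun t ht => ?_⟩
  rw [Real.dist_eq, sub_zero, abs_of_nonneg (hprodnn k t)]
  by_contra hcon
  push_neg at hcon
  -- every j in Icc (k+1) (t-1) has P j t ≥ e/(As+1)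
  have hjlow : ∀ j ∈ Finset.Icc (k+1) (t-1), e / (As + 1) ≤ ∏ i ∈ Finset.Ioc j t, ρ i := by
    intro j hj
    simp only [Finset.mem_Icc] at hj
    have hsplit : (∏ i ∈ Finset.Ioc k j, ρ i) * ∏ i ∈ Finset.Ioc j t, ρ i
        = ∏ i ∈ Finset.Ioc k t, ρ i := Finset.prod_Ioc_consecutive ρ (by omega) (by omega)
    have h1 : ∏ i ∈ Finset.Ioc k j, ρ i ≤ As := hsingle k j (by omega)
    have h2 : 0 < ∏ i ∈ Finset.Ioc k j, ρ i := by
      rcases lt_or_eq_of_le (hprodnn k j) with h | h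
      · exact h
      · exfalso; rw [← hsplit, ← h, zero_mul] at hcon; linarith
    rw [div_le_iff₀ hB]
    calc e ≤ ∏ i ∈ Finset.Ioc k t, ρ i := hcon
      _ = (∏ i ∈ Finset.Ioc j t, ρ i) * ∏ i ∈ Finset.Ioc k j, ρ i := by rw [← hsplit]; ring
      _ ≤ (∏ i ∈ Finset.Ioc j t, ρ i) * (As + 1) := by
          exact mul_le_mul_of_nonneg_left (by linarith) (hprodnn j t)
  -- count
  have hcard : ((t - 1 - k : ℕ) : ℝ) * (e / (As + 1)) ≤ As := by
    have := Finset.card_nsmul_le_sum (Finset.Icc (k+1) (t-1))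
      (fun j => ∏ i ∈ Finset.Ioc j t, ρ i) (e / (As+1)) hjlow
    rw [Nat.card_Icc] at this
    have hsub : ∑ j ∈ Finset.Icc (k+1) (t-1), ∏ i ∈ Finset.Ioc j t, ρ i
        ≤ ∑ j ∈ Finset.Ico 0 t, ∏ i ∈ Finset.Ioc j t, ρ i := by
      refine Finset.sum_le_sum_of_subset_of_nonneg ?_ (fun j _ _ => hprodnn j t)
      intro j hj; simp only [Finset.mem_Icc, Finset.mem_Ico] at *; omega
    have hub := le_trans hsub (hP t (by omega))
    have : ((t - 1 + 1 - (k+1) : ℕ) : ℝ) * (e / (As+1)) ≤ As := by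
      calc ((t - 1 + 1 - (k+1) : ℕ) : ℝ) * (e / (As+1))
          ≤ ∑ j ∈ Finset.Icc (k+1) (t-1), ∏ i ∈ Finset.Ioc j t, ρ i := by
            simpa [nsmul_eq_mul] using this
        _ ≤ As := hub
    convert this using 3
    omega
  have hceil : As * (As + 1) / e ≤ (⌈As * (As + 1) / e⌉₊ : ℝ) := Nat.le_ceil _
  have hnat : (⌈As * (As + 1) / e⌉₊ : ℕ) + 1 ≤ t - 1 - k := by omega
  have hnat' : ((⌈As * (As + 1) / e⌉₊ : ℕ) : ℝ) + 1 ≤ ((t - 1 - k : ℕ) : ℝ) := by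
    exact_mod_cast hnat
  have h6 : As * (As+1) < ((t-1-k : ℕ) : ℝ) * e := by
    have : As * (As+1)/e < ((t-1-k : ℕ) : ℝ) := by linarith
    rwa [div_lt_iff₀ he] at this
  have h5 : ((t-1-k : ℕ) : ℝ) * e ≤ As * (As+1) := by
    have := mul_le_mul_of_nonneg_right hcard (le_of_lt hB)
    rwa [mul_assoc, div_mul_cancel₀ _ (ne_of_gt hB)] at this
  linarith

theorem stmt6 {n : ℕ} [NeZero n] {Ω : Type*} [MeasurableSpace Ω]
    (μ : Measure Ω) [IsProbabilityMeasure μ]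
    (A : ℕ → Matrix (Fin n) (Fin n) ℝ) (ε : ℕ → Fin n → ℝ)
    (hA : ∀ t i j, 0 ≤ A t i j) (hrow : ∀ t i, ∑ j, A t i j = 1)
    (Y : ℕ → Ω → Fin n → ℝ) (γ : ℕ → Ω → Fin n → ℝ)
    (hdyn : ∀ t ≥ 1, ∀ ω, Y t ω =
      (A t - Matrix.diagonal (ε t)).mulVec (Y (t - 1) ω) + fun i => ε t i * γ t ω i)
    (As : ℝ)
    (hsup : ∀ t ≥ 1,
      ∑ k ∈ Finset.Icc 1 t, ∏ i ∈ Finset.Ioc (t - k) t,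
        (⨆ l, (|A i l l - ε i l| + 1 - A i l l)) ≤ As)
    (hγ : ∀ᵐ ω ∂μ, Tendsto (fun t => ‖γ t ω‖) atTop (nhds 0)) :
    ∀ᵐ ω ∂μ, Tendsto (fun t => ‖Y t ω‖) atTop (nhds 0) := by
  set ρ : ℕ → ℝ := fun i => ⨆ l, (|A i l l - ε i l| + 1 - A i l l) with hρdef
  -- diagonal entries at most 1
  have hdiag : ∀ t i, A t i i ≤ 1 := by
    intro t i
    rw [← hrow t i]
    exact Finset.single_le_sum (fun j _ => hA t i j) (Finset.mem_univ i)
  -- each term is below the sup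
  have hρ_ge : ∀ t (l : Fin n), |A t l l - ε t l| + 1 - A t l l ≤ ρ t := by
    intro t l
    exact le_ciSup (f := fun l => |A t l l - ε t l| + 1 - A t l l)
      (Set.Finite.bddAbove (Set.finite_range _)) l
  have hρnn : ∀ t, 0 ≤ ρ t := by
    intro t
    have l0 : Fin n := ⟨0, Nat.pos_of_ne_zero (NeZero.ne n)⟩
    refine le_trans ?_ (hρ_ge t l0)
    have := abs_nonneg (A t l0 l0 - ε t l0)
    have := hdiag t l0
    linarith
  have hP : ∀ t, 1 ≤ t → ∑ j ∈ Finset.Ico 0 t, ∏ i ∈ Finset.Ioc j t, ρ i ≤ As := by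
    intro t ht
    rw [auxReindex]
    exact hsup t ht
  have hAs : 0 ≤ As := by
    have := hP 1 le_rfl
    have h0 := hρnn 1
    calc (0:ℝ) ≤ ρ 1 := h0
      _ = ∑ j ∈ Finset.Ico 0 1, ∏ i ∈ Finset.Ioc j 1, ρ i := by simp
      _ ≤ As := hP 1 le_rfl
  have hB : (0:ℝ) < As + 1 := by linarith
  -- ρ t ≤ As for t ≥ 1
  have hρle : ∀ k, 1 ≤ k → ρ k ≤ As := by
    intro k hk
    have hIoc : Finset.Ioc (k-1) k = {k} := by ext x; simp [Finset.mem_Ioc]; omega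
    have := Finset.single_le_sum (s := Finset.Ico 0 k) (f := fun j => ∏ i ∈ Finset.Ioc j k, ρ i)
      (fun j _ => Finset.prod_nonneg fun i _ => hρnn i)
      (a := k - 1) (by simp only [Finset.mem_Ico]; omega)
    simp only [hIoc, Finset.prod_singleton] at this
    exact le_trans this (hP k hk)
  -- the key recursion bound
  have hrec : ∀ t, 1 ≤ t → ∀ ω, ‖Y t ω‖ ≤ ρ t * ‖Y (t-1) ω‖ + (ρ t + 1) * ‖γ t ω‖ := by
    intro t ht ω
    have hZ := hdyn t ht ω
    set Z := Y (t-1) ω with hZdef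
    have hRHSnn : 0 ≤ ρ t * ‖Z‖ + (ρ t + 1) * ‖γ t ω‖ :=
      add_nonneg (mul_nonneg (hρnn t) (norm_nonneg _))
        (mul_nonneg (by linarith [hρnn t]) (norm_nonneg _))
    rw [pi_norm_le_iff_of_nonneg hRHSnn]
    intro i
    rw [hZ]
    simp only [Pi.add_apply, Matrix.mulVec, dotProduct, Matrix.sub_apply,
      Matrix.diagonal_apply]
    have hsum : ∑ j, |A t i j - if i = j then ε t i else 0|
        = |A t i i - ε t i| + (1 - A t i i) := by
      rw [Finset.sum_eq_add_sum_sdiff_singleton_of_mem (Finset.mem_univ i)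
        (fun j => |A t i j - if i = j then ε t i else 0|)]
      have h2 : ∀ j ∈ Finset.univ \ {i}, |A t i j - if i = j then ε t i else 0| = A t i j := by
        intro j hj
        simp only [Finset.mem_sdiff, Finset.mem_singleton] at hj
        rw [if_neg (fun h => hj.2 h.symm), sub_zero, abs_of_nonneg (hA t i j)]
      rw [Finset.sum_congr rfl h2, if_pos rfl]
      have hr := hrow t i
      rw [Finset.sum_eq_add_sum_sdiff_singleton_of_mem (Finset.mem_univ i) (fun j => A t i j)] at hr
      linarith
    have hepsb : |ε t i| ≤ ρ t + 1 := by
      have h3 : |ε t i| - |A t i i| ≤ |ε t i - A t i i| := abs_sub_abs_le_abs_sub _ _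
      rw [abs_sub_comm] at h3
      have h4 := hρ_ge t i
      have h5 : |A t i i| = A t i i := abs_of_nonneg (hA t i i)
      have := hdiag t i
      linarith
    calc ‖(∑ j, (A t i j - if i = j then ε t i else 0) * Z j) + ε t i * γ t ω i‖
        = |(∑ j, (A t i j - if i = j then ε t i else 0) * Z j) + ε t i * γ t ω i| :=
          Real.norm_eq_abs _
      _ ≤ |∑ j, (A t i j - if i = j then ε t i else 0) * Z j| + |ε t i * γ t ω i| :=
          abs_add_le _ _
      _ ≤ (∑ j, |A t i j - if i = j then ε t i else 0| * ‖Z‖) + |ε t i| * |γ t ω i| := by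
          gcongr
          · calc |∑ j, (A t i j - if i = j then ε t i else 0) * Z j|
                ≤ ∑ j, |(A t i j - if i = j then ε t i else 0) * Z j| :=
                  Finset.abs_sum_le_sum_abs _ _
              _ ≤ ∑ j, |A t i j - if i = j then ε t i else 0| * ‖Z‖ := by
                  refine Finset.sum_le_sum fun j _ => ?_
                  rw [abs_mul]
                  exact mul_le_mul_of_nonneg_left
                    (le_trans (le_of_eq (Real.norm_eq_abs (Z j)).symm) (norm_le_pi_norm Z j))
                    (abs_nonneg _)
          · rw [abs_mul]
      _ ≤ ρ t * ‖Z‖ + (ρ t + 1) * ‖γ t ω‖ := by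
          rw [← Finset.sum_mul, hsum]
          refine add_le_add ?_ ?_
          · exact mul_le_mul_of_nonneg_right (by linarith [hρ_ge t i]) (norm_nonneg _)
          · exact mul_le_mul hepsb
              (le_trans (le_of_eq (Real.norm_eq_abs (γ t ω i)).symm)
                (norm_le_pi_norm (γ t ω) i))
              (abs_nonneg _) (by linarith [hρnn t])
  -- conclude pointwise
  filter_upwards [hγ] with ω hg
  -- unrolled bound
  have hunroll : ∀ t, ‖Y t ω‖ ≤ (∏ i ∈ Finset.Ioc 0 t, ρ i) * ‖Y 0 ω‖
      + ∑ k ∈ Finset.Ioc 0 t, (∏ i ∈ Finset.Ioc k t, ρ i) * ((ρ k + 1) * ‖γ k ω‖) := by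
    intro t
    induction t with
    | zero => simp
    | succ s ih =>
      have hr := hrec (s+1) (by omega) ω
      simp only [Nat.add_sub_cancel] at hr
      have hsum : ∑ k ∈ Finset.Ioc 0 s, (∏ i ∈ Finset.Ioc k (s+1), ρ i) * ((ρ k + 1) * ‖γ k ω‖)
          = ∑ k ∈ Finset.Ioc 0 s,
              ((∏ i ∈ Finset.Ioc k s, ρ i) * ((ρ k + 1) * ‖γ k ω‖)) * ρ (s+1) :=
        Finset.sum_congr rfl fun k hk => by
          rw [Finset.prod_Ioc_succ_top (Finset.mem_Ioc.mp hk).2]; ring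
      calc ‖Y (s+1) ω‖ ≤ ρ (s+1) * ‖Y s ω‖ + (ρ (s+1) + 1) * ‖γ (s+1) ω‖ := hr
        _ ≤ ρ (s+1) * ((∏ i ∈ Finset.Ioc 0 s, ρ i) * ‖Y 0 ω‖
              + ∑ k ∈ Finset.Ioc 0 s, (∏ i ∈ Finset.Ioc k s, ρ i) * ((ρ k + 1) * ‖γ k ω‖))
            + (ρ (s+1) + 1) * ‖γ (s+1) ω‖ := by
            have := mul_le_mul_of_nonneg_left ih (hρnn (s+1))
            linarith
        _ = (∏ i ∈ Finset.Ioc 0 (s+1), ρ i) * ‖Y 0 ω‖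
            + ∑ k ∈ Finset.Ioc 0 (s+1), (∏ i ∈ Finset.Ioc k (s+1), ρ i) * ((ρ k + 1) * ‖γ k ω‖) := by
            rw [Finset.sum_Ioc_succ_top (Nat.zero_le s), hsum,
              Finset.prod_Ioc_succ_top (Nat.zero_le s), Finset.Ioc_self, Finset.prod_empty,
              ← Finset.sum_mul]
            ring
  -- sums of products bounded by As + 1
  have hsumP : ∀ t, 1 ≤ t → ∑ k ∈ Finset.Ioc 0 t, ∏ i ∈ Finset.Ioc k t, ρ i ≤ As + 1 := by
    intro t ht
    obtain ⟨s, rfl⟩ : ∃ s, t = s + 1 := ⟨t - 1, by omega⟩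
    rw [Finset.sum_Ioc_succ_top (Nat.zero_le s), Finset.Ioc_self, Finset.prod_empty]
    have hsub : ∑ k ∈ Finset.Ioc 0 s, ∏ i ∈ Finset.Ioc k (s+1), ρ i
        ≤ ∑ k ∈ Finset.Ico 0 (s+1), ∏ i ∈ Finset.Ioc k (s+1), ρ i := by
      refine Finset.sum_le_sum_of_subset_of_nonneg ?_
        (fun k _ _ => Finset.prod_nonneg fun i _ => hρnn i)
      intro k hk; simp only [Finset.mem_Ioc, Finset.mem_Ico] at *; omega
    have := le_trans hsub (hP (s+1) (by omega))
    linarith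
  rw [tendsto_order]
  constructor
  · intro a ha
    filter_upwards with t
    exact lt_of_lt_of_le ha (norm_nonneg _)
  · intro a ha
    set e' : ℝ := a / (2 * (As+1) * (As+1)) with he'def
    have he' : 0 < e' := by positivity
    obtain ⟨N₁, hN₁⟩ := Metric.tendsto_atTop.mp hg e' he'
    have hgsmall : ∀ k, N₁ ≤ k → ‖γ k ω‖ ≤ e' := by
      intro k hk
      have := hN₁ k hk
      rw [Real.dist_eq, sub_zero, abs_of_nonneg (norm_nonneg _)] at this
      linarith
    -- head tends to 0
    have hF : Tendsto (fun t => (∏ i ∈ Finset.Ioc 0 t, ρ i) * ‖Y 0 ω‖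
        + ∑ k ∈ Finset.Ioc 0 N₁, (∏ i ∈ Finset.Ioc k t, ρ i) * ((ρ k + 1) * ‖γ k ω‖))
        atTop (nhds 0) := by
      have h1 := (auxProdTendsto ρ hρnn As hP 0).mul_const (‖Y 0 ω‖)
      have h2 := tendsto_finset_sum (Finset.Ioc 0 N₁)
        (fun k _ => (auxProdTendsto ρ hρnn As hP k).mul_const ((ρ k + 1) * ‖γ k ω‖))
      have := h1.add h2
      simpa using this
    have hFev := hF.eventually_lt_const (by linarith : (0:ℝ) < a/2)
    rw [eventually_atTop] at hFev
    obtain ⟨N₂, hN₂⟩ := hFev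
    rw [eventually_atTop]
    refine ⟨max N₂ (N₁ + 1), fun t ht => ?_⟩
    have htN₁ : N₁ + 1 ≤ t := le_trans (le_max_right _ _) ht
    have htN₂ : N₂ ≤ t := le_trans (le_max_left _ _) ht
    have hsplit : ∑ k ∈ Finset.Ioc 0 N₁, (∏ i ∈ Finset.Ioc k t, ρ i) * ((ρ k + 1) * ‖γ k ω‖)
        + ∑ k ∈ Finset.Ioc N₁ t, (∏ i ∈ Finset.Ioc k t, ρ i) * ((ρ k + 1) * ‖γ k ω‖)
        = ∑ k ∈ Finset.Ioc 0 t, (∏ i ∈ Finset.Ioc k t, ρ i) * ((ρ k + 1) * ‖γ k ω‖) :=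
      Finset.sum_Ioc_consecutive _ (Nat.zero_le N₁) (by omega)
    have htail : ∑ k ∈ Finset.Ioc N₁ t, (∏ i ∈ Finset.Ioc k t, ρ i) * ((ρ k + 1) * ‖γ k ω‖)
        ≤ a / 2 := by
      have hterm : ∀ k ∈ Finset.Ioc N₁ t, (∏ i ∈ Finset.Ioc k t, ρ i) * ((ρ k + 1) * ‖γ k ω‖)
          ≤ (∏ i ∈ Finset.Ioc k t, ρ i) * ((As + 1) * e') := by
        intro k hk
        simp only [Finset.mem_Ioc] at hk
        have h1 : ρ k + 1 ≤ As + 1 := by linarith [hρle k (by omega)]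
        have h2 : ‖γ k ω‖ ≤ e' := hgsmall k (by omega)
        have hρk1 : (0:ℝ) ≤ ρ k + 1 := by linarith [hρnn k]
        refine mul_le_mul_of_nonneg_left ?_ (Finset.prod_nonneg fun i _ => hρnn i)
        exact mul_le_mul h1 h2 (norm_nonneg _) (by linarith)
      calc ∑ k ∈ Finset.Ioc N₁ t, (∏ i ∈ Finset.Ioc k t, ρ i) * ((ρ k + 1) * ‖γ k ω‖)
          ≤ ∑ k ∈ Finset.Ioc N₁ t, (∏ i ∈ Finset.Ioc k t, ρ i) * ((As + 1) * e') :=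
            Finset.sum_le_sum hterm
        _ = (∑ k ∈ Finset.Ioc N₁ t, ∏ i ∈ Finset.Ioc k t, ρ i) * ((As + 1) * e') := by
            rw [Finset.sum_mul]
        _ ≤ (As + 1) * ((As + 1) * e') := by
            refine mul_le_mul_of_nonneg_right ?_ (by positivity)
            refine le_trans ?_ (hsumP t (by omega))
            refine Finset.sum_le_sum_of_subset_of_nonneg ?_
              (fun k _ _ => Finset.prod_nonneg fun i _ => hρnn i)
            intro k hk; simp only [Finset.mem_Ioc] at *; omega
        _ = a / 2 := by
            rw [he'def]; field_simp
    calc ‖Y t ω‖ ≤ (∏ i ∈ Finset.Ioc 0 t, ρ i) * ‖Y 0 ω‖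
          + ∑ k ∈ Finset.Ioc 0 t, (∏ i ∈ Finset.Ioc k t, ρ i) * ((ρ k + 1) * ‖γ k ω‖) :=
        hunroll t
      _ = ((∏ i ∈ Finset.Ioc 0 t, ρ i) * ‖Y 0 ω‖
          + ∑ k ∈ Finset.Ioc 0 N₁, (∏ i ∈ Finset.Ioc k t, ρ i) * ((ρ k + 1) * ‖γ k ω‖))
          + ∑ k ∈ Finset.Ioc N₁ t, (∏ i ∈ Finset.Ioc k t, ρ i) * ((ρ k + 1) * ‖γ k ω‖) := by
          rw [← hsplit]; ring
      _ < a/2 + a/2 := by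
          have := hN₂ t htN₂
          exact add_lt_add_of_lt_of_le this htail
      _ = a := by ring
end

section
/- Let φ be the characteristic function of a real random variable Y and ψ the characteristic function of a real random variable γ, and suppose that for all ξ ∈ ℝ and all x ∈ [1/4, 3/4], φ(ξ) = φ((1-x)ξ)·ψ(xξ). Then φ = ψ, i.e. Y and γ have the same distribution. -/
open MeasureTheory Complex

noncomputable def cf (μ : Measure ℝ) (ξ : ℝ) : ℂ :=
  ∫ y, Complex.exp (Complex.I * ξ * y) ∂μ

lemma cf_congr {μ : Measure ℝ} {c : ℂ} {a : ℝ} (hca : c = (a : ℂ)) :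
    (∫ y : ℝ, Complex.exp (Complex.I * c * y) ∂μ) = cf μ a := by
  rw [hca]; rfl

lemma cf_zero (μ : Measure ℝ) [IsProbabilityMeasure μ] : cf μ 0 = 1 := by
  simp [cf]

lemma norm_exp_I_mul (ξ y : ℝ) : ‖Complex.exp (Complex.I * ξ * y)‖ = 1 := by
  have : Complex.I * ξ * y = ((ξ * y : ℝ) : ℂ) * Complex.I := by push_cast; ring
  rw [this, Complex.norm_exp_ofReal_mul_I]

lemma cf_continuous (μ : Measure ℝ) [IsProbabilityMeasure μ] : Continuous (cf μ) := by
  apply continuous_of_dominated (bound := fun _ : ℝ => (1 : ℝ))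
  · intro ξ
    exact (Continuous.aestronglyMeasurable (by continuity))
  · intro ξ
    exact Filter.Eventually.of_forall fun y => le_of_eq (norm_exp_I_mul ξ y)
  · exact integrable_const 1
  · exact Filter.Eventually.of_forall fun y => by continuity

lemma cf_neg (μ : Measure ℝ) (t : ℝ) : cf μ (-t) = (starRingEnd ℂ) (cf μ t) := by
  rw [cf, cf, ← integral_conj]
  congr 1; funext y
  rw [← Complex.exp_conj]
  congr 1
  simp [Complex.ext_iff, mul_comm]

section main
set_option linter.unusedSectionVars false
variable {μ ν : Measure ℝ} [IsProbabilityMeasure μ] [IsProbabilityMeasure ν]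

variable (h : ∀ ξ : ℝ, ∀ x ∈ Set.Icc (1/4 : ℝ) (3/4),
      (∫ y, Complex.exp (Complex.I * ξ * y) ∂μ) =
        (∫ y, Complex.exp (Complex.I * ((1 - x) * ξ) * y) ∂μ) *
          ∫ y, Complex.exp (Complex.I * (x * ξ) * y) ∂ν)

include h

lemma hA (t : ℝ) : cf μ (4 * t) = cf μ (3 * t) * cf ν t := by
  have h1 := h (4 * t) (1/4) (by norm_num)
  rw [cf_congr (show ((1:ℂ) - (1/4 : ℝ)) * ((4 * t : ℝ) : ℂ) = ((3 * t : ℝ) : ℂ) by push_cast; ring),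
    cf_congr (show ((1/4 : ℝ) : ℂ) * ((4 * t : ℝ) : ℂ) = ((t : ℝ) : ℂ) by push_cast; ring)] at h1
  exact h1

lemma hB (t : ℝ) : cf μ (4 * t) = cf μ t * cf ν (3 * t) := by
  have h1 := h (4 * t) (3/4) (by norm_num)
  rw [cf_congr (show ((1:ℂ) - (3/4 : ℝ)) * ((4 * t : ℝ) : ℂ) = ((t : ℝ) : ℂ) by push_cast; ring),
    cf_congr (show ((3/4 : ℝ) : ℂ) * ((4 * t : ℝ) : ℂ) = ((3 * t : ℝ) : ℂ) by push_cast; ring)] at h1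
  exact h1

lemma hC (t : ℝ) : cf μ (2 * t) = cf μ t * cf ν t := by
  have h1 := h (2 * t) (1/2) (by norm_num)
  rw [cf_congr (show ((1:ℂ) - (1/2 : ℝ)) * ((2 * t : ℝ) : ℂ) = ((t : ℝ) : ℂ) by push_cast; ring),
    cf_congr (show ((1/2 : ℝ) : ℂ) * ((2 * t : ℝ) : ℂ) = ((t : ℝ) : ℂ) by push_cast; ring)] at h1
  exact h1

lemma cf_mu_ne_zero : ∀ t : ℝ, cf μ t ≠ 0 := by
  by_contra hcon
  push_neg at hcon
  obtain ⟨t₀, ht₀⟩ := hcon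
  -- a positive zero exists
  have hpos : ∃ t > (0:ℝ), cf μ t = 0 := by
    rcases lt_trichotomy t₀ 0 with hlt | heq | hgt
    · refine ⟨-t₀, by linarith, ?_⟩
      rw [cf_neg, ht₀, map_zero]
    · exfalso; rw [heq, cf_zero] at ht₀; exact one_ne_zero ht₀
    · exact ⟨t₀, hgt, ht₀⟩
  -- near zero, cf μ is nonzero
  have hev : ∀ᶠ s in nhds (0:ℝ), cf μ s ≠ 0 := by
    apply (cf_continuous μ).continuousAt.eventually_ne
    rw [cf_zero]; exact one_ne_zero
  obtain ⟨ε, hε, hball⟩ := Metric.eventually_nhds_iff.mp hev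
  have hband : ∀ s : ℝ, cf μ s = 0 → s > 0 → ε ≤ s := by
    intro s hs hs0
    by_contra hb
    push_neg at hb
    exact hball (by rw [Real.dist_eq, sub_zero, abs_of_pos hs0]; exact hb) hs
  set S : Set ℝ := {s : ℝ | cf μ s = 0} ∩ Set.Ici ε with hS
  have hSne : S.Nonempty := by
    obtain ⟨t, ht, htz⟩ := hpos
    exact ⟨t, htz, hband t htz ht⟩
  have hScl : IsClosed S :=
    (isClosed_singleton.preimage (cf_continuous μ)).inter isClosed_Ici
  have hSbdd : BddBelow S := ⟨ε, fun s hs => hs.2⟩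
  set T := sInf S with hT
  have hTS : T ∈ S := hScl.csInf_mem hSne hSbdd
  have hTpos : 0 < T := lt_of_lt_of_le hε hTS.2
  have hTz : cf μ T = 0 := hTS.1
  have hmin : ∀ u : ℝ, 0 < u → u < T → cf μ u ≠ 0 := by
    intro u hu huT hz
    have : u ∈ S := ⟨hz, hband u hz hu⟩
    exact absurd (csInf_le hSbdd this) (not_le.mpr huT)
  -- ψ(T/4) = 0
  have hψ : cf ν (T/4) = 0 := by
    have h1 := hA h (T/4)
    rw [show 4 * (T/4) = T by ring] at h1
    have h2 : cf μ (3 * (T/4)) ≠ 0 := hmin _ (by linarith) (by linarith)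
    have := h1.symm.trans hTz
    rcases mul_eq_zero.mp (hTz ▸ h1.symm) with hc | hc
    · exact absurd hc h2
    · exact hc
  -- contradiction using cf μ (T/3)
  have h3 := hB h (T/12)
  rw [show 4 * (T/12) = T/3 by ring, show 3 * (T/12) = T/4 by ring, hψ, mul_zero] at h3
  exact hmin (T/3) (by linarith) (by linarith) h3

lemma cf_nu_ne_zero : ∀ t : ℝ, cf ν t ≠ 0 := by
  intro t
  have h1 := hC h t
  intro hz
  rw [hz, mul_zero] at h1
  exact cf_mu_ne_zero h (2 * t) h1

lemma cf_eq : ∀ t : ℝ, cf μ t = cf ν t := by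
  have hK : ∀ s : ℝ, cf μ (3 * s) * cf ν s = cf μ s * cf ν (3 * s) := by
    intro s
    rw [← hA h s, ← hB h s]
  intro t
  have hn : ∀ n : ℕ, cf μ t * cf ν (t / 3 ^ n) = cf ν t * cf μ (t / 3 ^ n) := by
    intro n
    induction n with
    | zero => simp [mul_comm]
    | succ n ih =>
      have h3 : t / 3 ^ n = 3 * (t / 3 ^ (n+1)) := by
        rw [pow_succ]; field_simp
      rw [h3] at ih
      set s := t / 3 ^ (n+1) with hs
      apply mul_right_cancel₀ (cf_nu_ne_zero h (3 * s))
      calc cf μ t * cf ν s * cf ν (3 * s)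
          = (cf μ t * cf ν (3 * s)) * cf ν s := by ring
        _ = (cf ν t * cf μ (3 * s)) * cf ν s := by rw [ih]
        _ = cf ν t * (cf μ (3 * s) * cf ν s) := by ring
        _ = cf ν t * (cf μ s * cf ν (3 * s)) := by rw [hK s]
        _ = cf ν t * cf μ s * cf ν (3 * s) := by ring
  have hlim : Filter.Tendsto (fun n : ℕ => t / 3 ^ n) Filter.atTop (nhds 0) := by
    have : (fun n : ℕ => t / 3 ^ n) = fun n : ℕ => t * (1/3 : ℝ) ^ n := by
      funext n; rw [div_pow, one_pow]; ring
    rw [this]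
    have := tendsto_pow_atTop_nhds_zero_of_lt_one (by norm_num : (0:ℝ) ≤ 1/3) (by norm_num)
    simpa using Filter.Tendsto.const_mul t this
  have l1 : Filter.Tendsto (fun n : ℕ => cf μ t * cf ν (t / 3 ^ n)) Filter.atTop
      (nhds (cf μ t)) := by
    have := ((cf_continuous ν).tendsto 0).comp hlim
    have := Filter.Tendsto.const_mul (cf μ t) this
    simpa [cf_zero] using this
  have l2 : Filter.Tendsto (fun n : ℕ => cf μ t * cf ν (t / 3 ^ n)) Filter.atTop
      (nhds (cf ν t)) := by
    have := ((cf_continuous μ).tendsto 0).comp hlim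
    have := Filter.Tendsto.const_mul (cf ν t) this
    simp only [hn]
    simpa [cf_zero] using this
  exact tendsto_nhds_unique l1 l2

end main
open scoped Real NNReal ENNReal BoundedContinuousFunction

section T
variable (T : ℝ) [Fact (0 < T)]

lemma integral_fourier_map (μ : Measure ℝ) [IsProbabilityMeasure μ] (n : ℤ) :
    (∫ z, fourier n z ∂(μ.map ((↑) : ℝ → AddCircle T))) = cf μ (2 * π * n / T) := by
  rw [integral_map AddCircle.measurable_mk'.aemeasurable
    (Continuous.aestronglyMeasurable (map_continuous (fourier n)))]
  rw [cf]
  congr 1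
  funext y
  rw [fourier_coe_apply]
  congr 1
  push_cast
  ring

end T

set_option maxHeartbeats 1000000 in
lemma map_addCircle_eq (μ ν : Measure ℝ) [IsProbabilityMeasure μ] [IsProbabilityMeasure ν]
    (heq : ∀ ξ : ℝ, cf μ ξ = cf ν ξ) (T : ℝ) (hT : 0 < T) :
    μ.map ((↑) : ℝ → AddCircle T) = ν.map ((↑) : ℝ → AddCircle T) := by
  haveI : Fact (0 < T) := ⟨hT⟩
  set mμ := μ.map ((↑) : ℝ → AddCircle T) with hmμ
  set mν := ν.map ((↑) : ℝ → AddCircle T) with hmν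
  haveI : IsProbabilityMeasure mμ :=
    Measure.isProbabilityMeasure_map AddCircle.measurable_mk'.aemeasurable
  haveI : IsProbabilityMeasure mν :=
    Measure.isProbabilityMeasure_map AddCircle.measurable_mk'.aemeasurable
  -- integrals of all continuous complex functions agree
  have key : ∀ (m : Measure (AddCircle T)) (_ : IsProbabilityMeasure m)
      (g₁ g₂ : C(AddCircle T, ℂ)),
      ‖(∫ z, g₁ z ∂m) - ∫ z, g₂ z ∂m‖ ≤ dist g₁ g₂ := by
    intro m hm g₁ g₂
    have i1 : Integrable (fun z => g₁ z) m :=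
      BoundedContinuousFunction.integrable m (BoundedContinuousFunction.mkOfCompact g₁)
    have i2 : Integrable (fun z => g₂ z) m :=
      BoundedContinuousFunction.integrable m (BoundedContinuousFunction.mkOfCompact g₂)
    rw [← integral_sub i1 i2]
    have hb : ∀ z : AddCircle T, ‖g₁ z - g₂ z‖ ≤ dist g₁ g₂ := by
      intro z
      rw [← dist_eq_norm]
      exact ContinuousMap.dist_apply_le_dist z
    calc ‖∫ z, (g₁ z - g₂ z) ∂m‖ ≤ dist g₁ g₂ * (m Set.univ).toReal :=
          norm_integral_le_of_norm_le_const (Filter.Eventually.of_forall hb)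
      _ = dist g₁ g₂ := by simp
  have hC : ∀ g : C(AddCircle T, ℂ), (∫ z, g z ∂mμ) = ∫ z, g z ∂mν := by
    set F : C(AddCircle T, ℂ) → ℂ :=
      fun g => (∫ z, g z ∂mμ) - ∫ z, g z ∂mν with hF
    have hFcont : Continuous F := by
      refine (LipschitzWith.of_dist_le_mul (K := 2) ?_).continuous
      intro g₁ g₂
      have e : F g₁ - F g₂ = ((∫ z, g₁ z ∂mμ) - ∫ z, g₂ z ∂mμ)
          - ((∫ z, g₁ z ∂mν) - ∫ z, g₂ z ∂mν) := by rw [hF]; ring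
      rw [dist_eq_norm, e]
      calc ‖_ - _‖ ≤ ‖(∫ z, g₁ z ∂mμ) - ∫ z, g₂ z ∂mμ‖
            + ‖(∫ z, g₁ z ∂mν) - ∫ z, g₂ z ∂mν‖ := norm_sub_le _ _
        _ ≤ dist g₁ g₂ + dist g₁ g₂ := add_le_add
            (key mμ inferInstance g₁ g₂) (key mν inferInstance g₁ g₂)
        _ = 2 * dist g₁ g₂ := by push_cast; ring
    have hFspan : ∀ g ∈ Submodule.span ℂ (Set.range (@fourier T)), F g = 0 := by
      intro g hg
      induction hg using Submodule.span_induction with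
      | mem g hgmem =>
        obtain ⟨n, rfl⟩ := hgmem
        rw [hF]
        simp only
        rw [integral_fourier_map T μ n, integral_fourier_map T ν n, heq, sub_self]
      | zero => simp [hF, integral_zero]
      | add g₁ g₂ _ _ h₁ h₂ =>
        have i1μ : Integrable (fun z => g₁ z) mμ :=
          BoundedContinuousFunction.integrable mμ (BoundedContinuousFunction.mkOfCompact g₁)
        have i2μ : Integrable (fun z => g₂ z) mμ :=
          BoundedContinuousFunction.integrable mμ (BoundedContinuousFunction.mkOfCompact g₂)
        have i1ν : Integrable (fun z => g₁ z) mν :=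
          BoundedContinuousFunction.integrable mν (BoundedContinuousFunction.mkOfCompact g₁)
        have i2ν : Integrable (fun z => g₂ z) mν :=
          BoundedContinuousFunction.integrable mν (BoundedContinuousFunction.mkOfCompact g₂)
        simp only [hF, ContinuousMap.add_apply] at *
        rw [integral_add i1μ i2μ, integral_add i1ν i2ν]
        have := sub_eq_zero.mp h₁
        have := sub_eq_zero.mp h₂
        rw [sub_eq_zero]
        rw [‹(∫ z, g₁ z ∂mμ) = _›, ‹(∫ z, g₂ z ∂mμ) = _›]
      | smul c g _ hg0 =>
        simp only [hF, ContinuousMap.smul_apply] at *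
        rw [integral_smul, integral_smul]
        rw [sub_eq_zero] at hg0 ⊢
        rw [hg0]
    intro g
    have hgmem : g ∈ (Submodule.span ℂ (Set.range (@fourier T))).topologicalClosure := by
      rw [span_fourier_closure_eq_top]
      trivial
    have hsub : F '' closure ((Submodule.span ℂ (Set.range (@fourier T))) : Set _)
        ⊆ closure (F '' ((Submodule.span ℂ (Set.range (@fourier T))) : Set _)) :=
      image_closure_subset_closure_image hFcont
    have : F g ∈ closure (F '' ((Submodule.span ℂ (Set.range (@fourier T))) : Set _)) :=
      hsub ⟨g, hgmem, rfl⟩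
    have himg : F '' ((Submodule.span ℂ (Set.range (@fourier T))) : Set _) ⊆ {0} := by
      rintro - ⟨g', hg', rfl⟩
      exact hFspan g' hg'
    have h0 : F g ∈ closure ({0} : Set ℂ) := closure_mono himg this
    rw [closure_singleton] at h0
    exact sub_eq_zero.mp h0
  -- conclude via lintegral of nonneg bounded continuous functions
  apply ext_of_forall_lintegral_eq_of_IsFiniteMeasure
  intro f
  have hg : Continuous fun z : AddCircle T => ((f z : ℝ) : ℂ) :=
    Complex.continuous_ofReal.comp (NNReal.continuous_coe.comp f.continuous)
  have := hC ⟨fun z => ((f z : ℝ) : ℂ), hg⟩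
  simp only [ContinuousMap.coe_mk] at this
  have e1 : (∫ z, ((f z : ℝ) : ℂ) ∂mμ) = ((∫ z, (f z : ℝ) ∂mμ : ℝ) : ℂ) := integral_ofReal
  have e2 : (∫ z, ((f z : ℝ) : ℂ) ∂mν) = ((∫ z, (f z : ℝ) ∂mν : ℝ) : ℂ) := integral_ofReal
  rw [e1, e2] at this
  have hR : (∫ z, (f z : ℝ) ∂mμ) = ∫ z, (f z : ℝ) ∂mν := by exact_mod_cast this
  rw [← ENNReal.toReal_eq_toReal_iff' (BoundedContinuousFunction.lintegral_lt_top_of_nnreal mμ f).ne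
    (BoundedContinuousFunction.lintegral_lt_top_of_nnreal mν f).ne]
  rw [BoundedContinuousFunction.toReal_lintegral_coe_eq_integral,
    BoundedContinuousFunction.toReal_lintegral_coe_eq_integral]
  exact hR

lemma far_tendsto (ρ : Measure ℝ) [IsProbabilityMeasure ρ] :
    Filter.Tendsto (fun n : ℕ => ρ {x : ℝ | (n : ℝ) ≤ |x|}) Filter.atTop (nhds 0) := by
  have h0 : (⋂ n : ℕ, {x : ℝ | (n : ℝ) ≤ |x|}) = ∅ := by
    ext x
    simp only [Set.mem_iInter, Set.mem_setOf_eq, Set.mem_empty_iff_false, iff_false, not_forall,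
      not_le]
    exact exists_nat_gt |x|
  have hmeas : ∀ n : ℕ, NullMeasurableSet {x : ℝ | (n : ℝ) ≤ |x|} ρ := fun n =>
    (isClosed_le continuous_const _root_.continuous_abs).measurableSet.nullMeasurableSet
  have hanti : Antitone fun n : ℕ => {x : ℝ | (n : ℝ) ≤ |x|} := by
    intro a b hab x hx
    simp only [Set.mem_setOf_eq] at hx ⊢
    exact le_trans (Nat.cast_le.mpr hab) hx
  have := tendsto_measure_iInter_atTop hmeas hanti ⟨0, (measure_lt_top ρ _).ne⟩
  rw [h0] at this
  simpa [Function.comp_def] using this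

lemma preimage_image_Icc (T a b : ℝ) :
    (fun x : ℝ => (x : AddCircle T)) ⁻¹' ((fun x : ℝ => (x : AddCircle T)) '' (Set.Icc a b)) =
      ⋃ k : ℤ, Set.Icc (a + k * T) (b + k * T) := by
  ext x
  simp only [Set.mem_preimage, Set.mem_image, Set.mem_iUnion, Set.mem_Icc]
  constructor
  · rintro ⟨s, hs, hsx⟩
    rw [QuotientAddGroup.eq] at hsx
    obtain ⟨k, hk⟩ := AddSubgroup.mem_zmultiples_iff.mp hsx
    rw [zsmul_eq_mul] at hk
    have hx' : x = s + k * T := by linarith [hk]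
    exact ⟨k, by linarith [hs.1], by linarith [hs.2]⟩
  · rintro ⟨k, h1, h2⟩
    refine ⟨x - k * T, ⟨by linarith, by linarith⟩, ?_⟩
    rw [QuotientAddGroup.eq]
    exact AddSubgroup.mem_zmultiples_iff.mpr ⟨k, by rw [zsmul_eq_mul]; ring⟩

lemma measure_Icc_le (μ ν : Measure ℝ) [IsProbabilityMeasure μ] [IsProbabilityMeasure ν]
    (heq : ∀ ξ : ℝ, cf μ ξ = cf ν ξ) (a b : ℝ) :
    μ (Set.Icc a b) ≤ ν (Set.Icc a b) := by
  refine ENNReal.le_of_forall_pos_le_add fun ε hε hfin => ?_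
  -- choose n with ν {x | n ≤ |x|} < ε
  have hev := (far_tendsto ν).eventually (gt_mem_nhds (show (0 : ℝ≥0∞) < ε by
    exact_mod_cast hε))
  obtain ⟨n, hn⟩ := hev.exists
  set T : ℝ := (n : ℝ) + |a| + |b| + 1 with hTdef
  have hT : 0 < T := by positivity
  haveI : Fact (0 < T) := ⟨hT⟩
  set p : ℝ → AddCircle T := fun x : ℝ => (x : AddCircle T) with hp
  have hpm : Measurable p := AddCircle.measurable_mk'
  have hmap := map_addCircle_eq μ ν heq T hT
  set A : Set (AddCircle T) := p '' (Set.Icc a b) with hA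
  have hAmeas : MeasurableSet A :=
    ((isCompact_Icc.image (AddCircle.continuous_mk' T)).isClosed).measurableSet
  have hsub2 : p ⁻¹' A ⊆ Set.Icc a b ∪ {x : ℝ | (n : ℝ) ≤ |x|} := by
    rw [hA, hp, preimage_image_Icc T a b]
    intro x hx
    obtain ⟨k, hk⟩ := Set.mem_iUnion.mp hx
    rcases lt_trichotomy k 0 with hk0 | hk0 | hk0
    · right
      have hk1 : (k : ℝ) ≤ -1 := by exact_mod_cast (by omega : k ≤ -1)
      have h1 : (k : ℝ) * T ≤ -T := by nlinarith
      have hxle : x ≤ b - T := by linarith [hk.2]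
      have h2 : b ≤ |b| := le_abs_self b
      have h3 : (n : ℝ) ≤ -x := by linarith [abs_nonneg a, le_abs_self b, hTdef]
      exact le_trans h3 (neg_le_abs x)
    · left
      rw [hk0] at hk
      simpa using hk
    · right
      have hk1 : (1 : ℝ) ≤ (k : ℝ) := by exact_mod_cast (by omega : 1 ≤ k)
      have h1 : T ≤ (k : ℝ) * T := by nlinarith
      have h2 : -|a| ≤ a := neg_abs_le a
      have hxge : (n : ℝ) ≤ x := by
        linarith [abs_nonneg b, neg_abs_le a, hk.1, hTdef]
      exact le_trans hxge (le_abs_self x)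
  calc μ (Set.Icc a b) ≤ μ (p ⁻¹' A) := measure_mono (Set.subset_preimage_image p _)
    _ = (μ.map p) A := (Measure.map_apply hpm hAmeas).symm
    _ = (ν.map p) A := by rw [hmap]
    _ = ν (p ⁻¹' A) := Measure.map_apply hpm hAmeas
    _ ≤ ν (Set.Icc a b) + ν {x : ℝ | (n : ℝ) ≤ |x|} :=
        le_trans (measure_mono hsub2) (measure_union_le _ _)
    _ ≤ ν (Set.Icc a b) + ε := add_le_add le_rfl hn.le

lemma measure_eq_of_cf (μ ν : Measure ℝ) [IsProbabilityMeasure μ] [IsProbabilityMeasure ν]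
    (heq : ∀ ξ : ℝ, cf μ ξ = cf ν ξ) : μ = ν := by
  have hIcc : ∀ a b : ℝ, μ (Set.Icc a b) = ν (Set.Icc a b) := fun a b =>
    le_antisymm (measure_Icc_le μ ν heq a b)
      (measure_Icc_le ν μ (fun ξ => (heq ξ).symm) a b)
  refine Measure.ext_of_Ioc μ ν fun a b hab => ?_
  have hsing : μ {a} = ν {a} := by
    have := hIcc a a
    rwa [Set.Icc_self] at this
  have hdecomp : ∀ (ρ : Measure ℝ), ρ (Set.Icc a b) = ρ {a} + ρ (Set.Ioc a b) := by
    intro ρ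
    rw [← Set.Ioc_insert_left hab.le, Set.insert_eq,
      measure_union (by simp [Set.disjoint_singleton_left]) measurableSet_Ioc]
  have h1 := hIcc a b
  rw [hdecomp μ, hdecomp ν, hsing] at h1
  exact (ENNReal.add_right_inj (measure_lt_top ν {a}).ne).mp h1

theorem stmt7 (μ ν : Measure ℝ) [IsProbabilityMeasure μ] [IsProbabilityMeasure ν]
    (h : ∀ ξ : ℝ, ∀ x ∈ Set.Icc (1/4 : ℝ) (3/4),
      (∫ y, Complex.exp (Complex.I * ξ * y) ∂μ) =
        (∫ y, Complex.exp (Complex.I * ((1 - x) * ξ) * y) ∂μ) *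
          ∫ y, Complex.exp (Complex.I * (x * ξ) * y) ∂ν) :
    (∀ ξ : ℝ, (∫ y, Complex.exp (Complex.I * ξ * y) ∂μ) =
      ∫ y, Complex.exp (Complex.I * ξ * y) ∂ν) ∧ μ = ν := by
  have heq : ∀ ξ : ℝ, cf μ ξ = cf ν ξ := cf_eq h
  exact ⟨fun ξ => heq ξ, measure_eq_of_cf μ ν heq⟩
end

section
/- Let Y be an integrable real random variable whose characteristic function satisfies φ_Y(ξ) = φ_Y(ξ/2)² for all ξ ∈ ℝ. Then Y is almost surely constant, equal to E[Y]. -/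
open MeasureTheory Complex Filter Topology

lemma norm_exp_I_mul_eq_one (t x : ℝ) : ‖Complex.exp (Complex.I * t * x)‖ = 1 := by
  have h : Complex.I * t * x = ((t * x : ℝ) : ℂ) * Complex.I := by push_cast; ring
  rw [h, Complex.norm_exp_ofReal_mul_I]

lemma norm_exp_I_sub_one_le (s : ℝ) : ‖Complex.exp (Complex.I * s) - 1‖ ≤ |s| := by
  have hd : ∀ x : ℝ, x ∈ (Set.univ : Set ℝ) → HasDerivWithinAt
      (fun t : ℝ => Complex.exp (Complex.I * t)) (Complex.I * Complex.exp (Complex.I * x)) Set.univ x := by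
    intro x _
    have h1 : HasDerivAt (fun z : ℂ => Complex.exp (Complex.I * z))
        (Complex.exp (Complex.I * x) * Complex.I) (x : ℂ) := by
      have : HasDerivAt (fun z : ℂ => Complex.I * z) Complex.I (x : ℂ) := by
        simpa using (hasDerivAt_id (x : ℂ)).const_mul Complex.I
      simpa using this.cexp
    have := h1.comp_ofReal
    exact ((by ring_nf at this ⊢; exact this : HasDerivAt
      (fun t : ℝ => Complex.exp (Complex.I * t)) (Complex.I * Complex.exp (Complex.I * x)) x)).hasDerivWithinAt
  have hb : ∀ x : ℝ, x ∈ (Set.univ : Set ℝ) → ‖Complex.I * Complex.exp (Complex.I * x)‖ ≤ 1 := by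
    intro x _
    rw [norm_mul, Complex.norm_I, one_mul]
    have := norm_exp_I_mul_eq_one 1 x
    simp only [Complex.ofReal_one, mul_one] at this
    rw [this]
  have := convex_univ.norm_image_sub_le_of_norm_hasDerivWithin_le hd hb (Set.mem_univ (0:ℝ)) (Set.mem_univ s)
  simpa using this

lemma norm_pow_sub_one_le {a : ℂ} (ha : ‖a‖ ≤ 1) (n : ℕ) : ‖a ^ n - 1‖ ≤ n * ‖a - 1‖ := by
  induction n with
  | zero => simp
  | succ k ih =>
    have : a ^ (k+1) - 1 = a ^ k * (a - 1) + (a ^ k - 1) := by ring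
    rw [this]
    calc ‖a ^ k * (a - 1) + (a ^ k - 1)‖ ≤ ‖a ^ k * (a - 1)‖ + ‖a ^ k - 1‖ := norm_add_le _ _
      _ ≤ 1 * ‖a - 1‖ + k * ‖a - 1‖ := by
          gcongr
          · rw [norm_mul]; gcongr; simpa using pow_le_one₀ (norm_nonneg a) ha
      _ = (k + 1 : ℕ) * ‖a - 1‖ := by push_cast; ring

lemma ptwise_lim (ξ x : ℝ) (hξ : ξ ≠ 0) :
    Tendsto (fun n : ℕ => (2 ^ n : ℂ) * (Complex.exp (Complex.I * ((ξ / 2 ^ n : ℝ) : ℂ) * x) - 1))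
      atTop (𝓝 (Complex.I * ξ * x)) := by
  have hder : HasDerivAt (fun t : ℝ => Complex.exp (Complex.I * t * x)) (Complex.I * x) 0 := by
    have h1 : HasDerivAt (fun z : ℂ => Complex.exp (Complex.I * z * x)) (Complex.I * x) 0 := by
      have h2 : HasDerivAt (fun z : ℂ => Complex.I * z * x) (Complex.I * x) 0 := by
        simpa using ((hasDerivAt_id (0 : ℂ)).const_mul Complex.I).mul_const (x : ℂ)
      simpa using h2.cexp
    simpa using h1.comp_ofReal
  have hslope := hasDerivAt_iff_tendsto_slope.mp hder
  have hseq : Tendsto (fun n : ℕ => ξ / 2 ^ n) atTop (𝓝[≠] 0) := by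
    apply tendsto_nhdsWithin_of_tendsto_nhds_of_eventually_within
    · have : Tendsto (fun n : ℕ => ((1:ℝ)/2) ^ n) atTop (𝓝 0) :=
        tendsto_pow_atTop_nhds_zero_of_lt_one (by norm_num) (by norm_num)
      have := this.const_mul ξ
      simpa [div_eq_mul_inv, mul_pow, mul_comm] using this
    · filter_upwards with n
      simp [div_eq_mul_inv, hξ, pow_ne_zero]
  have := (hslope.comp hseq).const_smul ξ
  have heq : ∀ n : ℕ, ξ • slope (fun t : ℝ => Complex.exp (Complex.I * t * x)) 0 (ξ / 2 ^ n)
      = (2 ^ n : ℂ) * (Complex.exp (Complex.I * ((ξ / 2 ^ n : ℝ) : ℂ) * x) - 1) := by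
    intro n
    have h2n : ((2:ℝ) ^ n) ≠ 0 := by positivity
    simp only [slope, vsub_eq_sub, sub_zero, smul_smul]
    have hc : ξ * (ξ / 2 ^ n)⁻¹ = 2 ^ n := by field_simp
    rw [hc, Complex.real_smul]
    push_cast
    simp
  rw [show Complex.I * ξ * x = ξ • (Complex.I * (x:ℂ)) by rw [Complex.real_smul]; ring] 
  refine this.congr fun n => heq n

lemma exp_integrable {Ω : Type*} [MeasurableSpace Ω] (μ : Measure Ω) [IsProbabilityMeasure μ]
    {X : Ω → ℝ} (hX : AEStronglyMeasurable X μ) (t : ℝ) :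
    Integrable (fun ω => Complex.exp (Complex.I * t * X ω)) μ := by
  refine ⟨(Complex.continuous_exp.comp (by continuity : Continuous fun x : ℝ =>
    Complex.I * t * x)).comp_aestronglyMeasurable hX, ?_⟩
  refine HasFiniteIntegral.of_bounded (C := 1) ?_
  filter_upwards with ω
  exact le_of_eq (norm_exp_I_mul_eq_one t (X ω))

lemma psi_eq_one {Ω : Type*} [MeasurableSpace Ω] (μ : Measure Ω) [IsProbabilityMeasure μ]
    {X : Ω → ℝ} (hX : Integrable X μ) (hm : ∫ ω, X ω ∂μ = 0)
    (hfe : ∀ ξ : ℝ, (∫ ω, Complex.exp (Complex.I * ξ * X ω) ∂μ) =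
      (∫ ω, Complex.exp (Complex.I * (ξ / 2) * X ω) ∂μ) ^ 2) (ξ : ℝ) :
    (∫ ω, Complex.exp (Complex.I * ξ * X ω) ∂μ) = 1 := by
  set ψ : ℝ → ℂ := fun t => ∫ ω, Complex.exp (Complex.I * t * X ω) ∂μ with hψ
  rcases eq_or_ne ξ 0 with rfl | hξ
  · simp [hψ, Complex.exp_zero]
  have hnorm : ∀ t : ℝ, ‖ψ t‖ ≤ 1 := by
    intro t
    have h := norm_integral_le_of_norm_le_const (μ := μ) (C := 1)
      (f := fun ω => Complex.exp (Complex.I * t * X ω))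
      (by filter_upwards with ω; exact le_of_eq (norm_exp_I_mul_eq_one t (X ω)))
    simpa using h
  have hiter : ∀ n : ℕ, ψ ξ = ψ (ξ / 2 ^ n) ^ (2 ^ n) := by
    intro n
    induction n with
    | zero => simp
    | succ k ih =>
      rw [ih]
      have h2 : ψ (ξ / 2 ^ k) = ψ (ξ / 2 ^ k / 2) ^ 2 := by
        simp only [hψ]
        rw [show ((ξ / 2 ^ k / 2 : ℝ) : ℂ) = ((ξ / 2 ^ k : ℝ) : ℂ) / 2 by push_cast; ring]
        exact hfe _
      rw [h2, ← pow_mul, show ξ / 2 ^ k / 2 = ξ / 2 ^ (k + 1) by ring,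
        show 2 * 2 ^ k = 2 ^ (k + 1) by rw [pow_succ]; ring]
  have hlim : Tendsto (fun n : ℕ => (2 ^ n : ℂ) * (ψ (ξ / 2 ^ n) - 1)) atTop (𝓝 0) := by
    have hInt : ∀ n : ℕ, Integrable
        (fun ω => (2 ^ n : ℂ) * (Complex.exp (Complex.I * ((ξ / 2 ^ n : ℝ) : ℂ) * X ω) - 1)) μ :=
      fun n =>
        ((exp_integrable μ hX.1 (ξ / 2 ^ n)).sub (integrable_const 1)).const_mul ((2:ℂ) ^ n)
    have key : Tendsto (fun n : ℕ =>
        ∫ ω, (2 ^ n : ℂ) * (Complex.exp (Complex.I * ((ξ / 2 ^ n : ℝ) : ℂ) * X ω) - 1) ∂μ)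
        atTop (𝓝 (∫ ω, Complex.I * ξ * X ω ∂μ)) := by
      refine tendsto_integral_of_dominated_convergence (fun ω => |ξ| * |X ω|)
        (fun n => (hInt n).1) ((hX.abs.const_mul _)) ?_ ?_
      · intro n
        filter_upwards with ω
        have hn2 : ‖(2 ^ n : ℂ)‖ = (2:ℝ) ^ n := by simp
        rw [norm_mul, hn2]
        have h2 : ‖Complex.exp (Complex.I * ((ξ / 2 ^ n : ℝ) : ℂ) * X ω) - 1‖
            ≤ |ξ / 2 ^ n * X ω| := by
          rw [show Complex.I * ((ξ / 2 ^ n : ℝ) : ℂ) * X ω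
            = Complex.I * ((ξ / 2 ^ n * X ω : ℝ) : ℂ) by push_cast; ring]
          exact norm_exp_I_sub_one_le _
        calc (2:ℝ) ^ n * ‖Complex.exp (Complex.I * ((ξ / 2 ^ n : ℝ) : ℂ) * X ω) - 1‖
            ≤ (2:ℝ) ^ n * |ξ / 2 ^ n * X ω| := by gcongr
          _ = |ξ| * |X ω| := by
              rw [abs_mul, abs_div, show |(2:ℝ) ^ n| = 2 ^ n from abs_of_pos (by positivity)]
              have h2n : (0:ℝ) < 2 ^ n := by positivity
              field_simp
      · filter_upwards with ω
        exact ptwise_lim ξ (X ω) hξ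
    have hval : ∀ n : ℕ, (∫ ω, (2 ^ n : ℂ) *
        (Complex.exp (Complex.I * ((ξ / 2 ^ n : ℝ) : ℂ) * X ω) - 1) ∂μ)
        = (2 ^ n : ℂ) * (ψ (ξ / 2 ^ n) - 1) := by
      intro n
      rw [integral_const_mul, integral_sub (exp_integrable μ hX.1 _) (integrable_const 1)]
      simp [hψ]
    have hrhs : (∫ ω, Complex.I * ξ * X ω ∂μ) = 0 := by
      have h4 : (∫ ω, (X ω : ℂ) ∂μ) = ((∫ ω, X ω ∂μ : ℝ) : ℂ) := integral_ofReal
      have h3 : (∫ ω, Complex.I * ξ * (X ω : ℂ) ∂μ) = Complex.I * ξ * ((∫ ω, X ω ∂μ : ℝ) : ℂ) := by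
        rw [integral_const_mul, h4]
      rw [h3, hm]; simp
    rw [hrhs] at key
    exact key.congr hval
  have hbound : ∀ n : ℕ, ‖ψ ξ - 1‖ ≤ ‖(2 ^ n : ℂ) * (ψ (ξ / 2 ^ n) - 1)‖ := by
    intro n
    rw [norm_mul]
    have hn2 : ‖(2 ^ n : ℂ)‖ = (2 : ℝ) ^ n := by simp
    rw [hn2, hiter n]
    calc ‖ψ (ξ / 2 ^ n) ^ 2 ^ n - 1‖ ≤ (2 ^ n : ℕ) * ‖ψ (ξ / 2 ^ n) - 1‖ :=
        norm_pow_sub_one_le (hnorm _) _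
      _ = (2 : ℝ) ^ n * ‖ψ (ξ / 2 ^ n) - 1‖ := by push_cast; ring
  have hle : ‖ψ ξ - 1‖ ≤ 0 := by
    have hg := ge_of_tendsto hlim.norm (by filter_upwards with n; exact hbound n)
    simpa using hg
  have h0 : ψ ξ - 1 = 0 := by rwa [← norm_le_zero_iff]
  have h1 := sub_eq_zero.mp h0
  simpa [hψ] using h1

theorem stmt8 {Ω : Type*} [MeasurableSpace Ω] (μ : Measure Ω) [IsProbabilityMeasure μ]
    (Y : Ω → ℝ) (hY : Integrable Y μ)
    (h : ∀ ξ : ℝ, (∫ ω, Complex.exp (Complex.I * ξ * Y ω) ∂μ) =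
      (∫ ω, Complex.exp (Complex.I * (ξ / 2) * Y ω) ∂μ) ^ 2) :
    ∀ᵐ ω ∂μ, Y ω = ∫ ω', Y ω' ∂μ := by
  set m := ∫ ω', Y ω' ∂μ with hmdef
  set X : Ω → ℝ := fun ω => Y ω - m with hXdef
  have hXint : Integrable X μ := hY.sub (integrable_const m)
  have hXmean : ∫ ω, X ω ∂μ = 0 := by
    simp only [hXdef]
    rw [integral_sub hY (integrable_const m), integral_const]
    simp [hmdef]
  have hkey : ∀ t : ℝ, (∫ ω, Complex.exp (Complex.I * t * X ω) ∂μ)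
      = (∫ ω, Complex.exp (Complex.I * t * Y ω) ∂μ) * Complex.exp (-(Complex.I * t * m)) := by
    intro t
    rw [← integral_mul_const]
    refine integral_congr_ae (ae_of_all _ fun ω => ?_)
    show Complex.exp (Complex.I * t * X ω)
      = Complex.exp (Complex.I * t * Y ω) * Complex.exp (-(Complex.I * t * m))
    rw [← Complex.exp_add]
    congr 1
    simp only [hXdef]
    push_cast
    ring
  have hfeX : ∀ ξ : ℝ, (∫ ω, Complex.exp (Complex.I * ξ * X ω) ∂μ) =
      (∫ ω, Complex.exp (Complex.I * (ξ / 2) * X ω) ∂μ) ^ 2 := by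
    intro ξ
    have hc : ((ξ / 2 : ℝ) : ℂ) = (ξ : ℂ) / 2 := by push_cast; ring
    have hk2 := hkey (ξ / 2)
    simp only [hc] at hk2
    rw [hkey ξ, hk2, h ξ, mul_pow]
    congr 1
    rw [sq, ← Complex.exp_add]
    congr 1
    ring
  have hpsi := psi_eq_one μ hXint hXmean hfeX
  have hcos : ∀ ξ : ℝ, ∀ᵐ ω ∂μ, Real.cos (ξ * X ω) = 1 := by
    intro ξ
    have hcosint : Integrable (fun ω => Real.cos (ξ * X ω)) μ := by
      refine ⟨(Real.continuous_cos.comp (continuous_const.mul continuous_id)).comp_aestronglyMeasurable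
        hXint.1, ?_⟩
      refine HasFiniteIntegral.of_bounded (C := 1) ?_
      filter_upwards with ω
      exact Real.abs_cos_le_one _
    have h1 : (∫ ω, Real.cos (ξ * X ω) ∂μ) = 1 := by
      have h3 : (∫ ω, Real.cos (ξ * X ω) ∂μ) = (∫ ω, Complex.exp (Complex.I * ξ * X ω) ∂μ).re := by
        rw [← RCLike.re_eq_complex_re, ← integral_re (exp_integrable μ hXint.1 ξ)]
        refine integral_congr_ae (ae_of_all _ fun ω => ?_)
        show Real.cos (ξ * X ω) = RCLike.re (Complex.exp (Complex.I * ξ * X ω))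
        rw [RCLike.re_eq_complex_re,
          show Complex.I * ξ * X ω = ((ξ * X ω : ℝ) : ℂ) * Complex.I by push_cast; ring,
          Complex.exp_ofReal_mul_I_re]
      rw [h3, hpsi ξ]
      simp
    have hint : Integrable (fun ω => 1 - Real.cos (ξ * X ω)) μ :=
      (integrable_const 1).sub hcosint
    have h0 : ∫ ω, (1 - Real.cos (ξ * X ω)) ∂μ = 0 := by
      rw [integral_sub (integrable_const 1) hcosint, h1]
      simp
    have hae := (integral_eq_zero_iff_of_nonneg
      (fun ω => sub_nonneg.mpr (Real.cos_le_one _)) hint).mp h0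
    filter_upwards [hae] with ω hω
    have : 1 - Real.cos (ξ * X ω) = 0 := hω
    linarith
  filter_upwards [hcos 1, hcos (Real.sqrt 2)] with ω h1 h2
  rw [one_mul] at h1
  obtain ⟨k, hk⟩ := (Real.cos_eq_one_iff _).mp h1
  obtain ⟨l, hl⟩ := (Real.cos_eq_one_iff _).mp h2
  have hπ : (2 : ℝ) * Real.pi ≠ 0 := by positivity
  by_cases hk0 : (k : ℝ) = 0
  · have hX0 : X ω = 0 := by rw [← hk, hk0]; ring
    have : Y ω - m = 0 := hX0
    linarith
  · exfalso
    have hs : Real.sqrt 2 * ((k : ℝ) * (2 * Real.pi)) = (l : ℝ) * (2 * Real.pi) := by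
      rw [hk]; exact hl.symm
    have hkl : Real.sqrt 2 * (k : ℝ) = (l : ℝ) := by
      have := hs
      field_simp at this ⊢
      exact mul_right_cancel₀ Real.pi_ne_zero (by linarith)
    apply irrational_sqrt_two
    refine ⟨(l : ℚ) / (k : ℚ), ?_⟩
    push_cast
    rw [div_eq_iff hk0]
    exact hkl.symm
end

section
/- Consider the nonlinear dynamics X_t = A_t X_{t-1} + f_t(σ̄·1 - X_{t-1}) applied componentwise, where each A_t is row-stochastic, each f_{t,i}: ℝ → ℝ is differentiable with f_{t,i}(0) = 0, and there is δ ∈ (0,1) with δ < f'_{t,i}(ξ) < 2(a_t)ᵢᵢ - δ for all t, i, ξ. Then |X_t - σ̄·1|_∞ ≤ (1-δ)ᵗ |X_0 - σ̄·1|_∞, so X_t → σ̄·1. -/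
open Filter Finset

lemma aux_mvt (g : ℝ → ℝ) (C : ℝ) (hg : ∀ x, DifferentiableAt ℝ g x)
    (hb : ∀ x, ‖deriv g x‖ ≤ C) (y : ℝ) : ‖g y - g 0‖ ≤ C * ‖y - 0‖ :=
  Convex.norm_image_sub_le_of_norm_deriv_le (fun x _ => hg x)
    (fun x _ => hb x) convex_univ (Set.mem_univ 0) (Set.mem_univ y)

theorem stmt10 {n : ℕ} [NeZero n]
    (A : ℕ → Matrix (Fin n) (Fin n) ℝ)
    (hA : ∀ t i j, 0 ≤ A t i j) (hrow : ∀ t i, ∑ j, A t i j = 1)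
    (f : ℕ → Fin n → ℝ → ℝ)
    (hdiff : ∀ t i, Differentiable ℝ (f t i)) (h0 : ∀ t i, f t i 0 = 0)
    (δ : ℝ) (hδ : δ ∈ Set.Ioo (0 : ℝ) 1)
    (hd : ∀ t i ξ, δ < deriv (f t i) ξ ∧ deriv (f t i) ξ < 2 * A t i i - δ)
    (σ : ℝ) (X : ℕ → Fin n → ℝ)
    (hdyn : ∀ t, X (t + 1) =
      (A (t + 1)).mulVec (X t) + fun i => f (t + 1) i (σ - X t i)) :
    (∀ t, ‖X t - fun _ => σ‖ ≤ (1 - δ) ^ t * ‖X 0 - fun _ => σ‖) ∧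
    Tendsto X atTop (nhds fun _ => σ) := by
  obtain ⟨hδ0, hδ1⟩ := hδ
  have key : ∀ t, ‖X (t+1) - fun _ => σ‖ ≤ (1 - δ) * ‖X t - fun _ => σ‖ := by
    intro t
    set e : Fin n → ℝ := fun j => X t j - σ with he
    set M := ‖X t - fun _ => σ‖ with hM
    have hM0 : 0 ≤ M := norm_nonneg _
    have heM : ∀ j, |e j| ≤ M := fun j => by
      have h := norm_le_pi_norm (X t - fun _ => σ) j
      rw [Real.norm_eq_abs, Pi.sub_apply] at h
      exact h
    have hC : 0 ≤ (1 - δ) * M := mul_nonneg (by linarith) hM0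
    rw [pi_norm_le_iff_of_nonneg hC]
    intro i
    have haii : δ < A (t+1) i i := by
      have h1 := (hd (t+1) i 0).1
      have h2 := (hd (t+1) i 0).2
      linarith
    -- componentwise formula
    have hcomp : X (t+1) i - σ =
        (∑ j ∈ univ.erase i, A (t+1) i j * e j) + (A (t+1) i i * e i + f (t+1) i (-(e i))) := by
      have hX := congrFun (hdyn t) i
      have h1 : ∑ j ∈ univ.erase i, A (t+1) i j * e j + A (t+1) i i * e i
          = ∑ j, A (t+1) i j * e j :=
        Finset.sum_erase_add _ _ (mem_univ i)
      have h2 : ∑ j, A (t+1) i j * e j = (∑ j, A (t+1) i j * X t j) - σ := by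
        simp only [he, mul_sub]
        rw [Finset.sum_sub_distrib, ← Finset.sum_mul, hrow (t+1) i, one_mul]
      have h3 : σ - X t i = -(e i) := by simp [he]
      simp only [Pi.sub_apply, Pi.add_apply, Matrix.mulVec, dotProduct] at hX ⊢
      rw [hX, h3]
      linarith
    -- bound the g part via MVT
    set g : ℝ → ℝ := fun y => A (t+1) i i * y + f (t+1) i (-y) with hg
    have hgd : ∀ y : ℝ, HasDerivAt g (A (t+1) i i * 1 + deriv (f (t+1) i) (-y) * (-1)) y := by
      intro y
      exact ((hasDerivAt_id y).const_mul (A (t+1) i i)).add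
        (((hdiff (t+1) i (-y)).hasDerivAt).comp y (hasDerivAt_neg y))
    have hgderiv : ∀ y : ℝ, deriv g y = A (t+1) i i - deriv (f (t+1) i) (-y) := by
      intro y
      have := (hgd y).deriv
      rw [this]; ring
    have hgb : ∀ y : ℝ, ‖deriv g y‖ ≤ A (t+1) i i - δ := by
      intro y
      rw [hgderiv y, Real.norm_eq_abs, abs_le]
      have h1 := (hd (t+1) i (-y)).1
      have h2 := (hd (t+1) i (-y)).2
      constructor <;> linarith
    have hgbound : |A (t+1) i i * e i + f (t+1) i (-(e i))| ≤ (A (t+1) i i - δ) * M := by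
      have := aux_mvt g (A (t+1) i i - δ) (fun x => (hgd x).differentiableAt) hgb (e i)
      have hg0 : g 0 = 0 := by simp [hg, h0]
      rw [hg0, sub_zero, sub_zero, Real.norm_eq_abs, Real.norm_eq_abs] at this
      calc |A (t+1) i i * e i + f (t+1) i (-(e i))| = |g (e i)| := by rw [hg]
        _ ≤ (A (t+1) i i - δ) * |e i| := this
        _ ≤ (A (t+1) i i - δ) * M :=
            mul_le_mul_of_nonneg_left (heM i) (by linarith)
    -- bound the sum part
    have hsumb : |∑ j ∈ univ.erase i, A (t+1) i j * e j|
        ≤ (∑ j ∈ univ.erase i, A (t+1) i j) * M := by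
      calc |∑ j ∈ univ.erase i, A (t+1) i j * e j|
          ≤ ∑ j ∈ univ.erase i, |A (t+1) i j * e j| := Finset.abs_sum_le_sum_abs _ _
        _ ≤ ∑ j ∈ univ.erase i, A (t+1) i j * M := by
            apply Finset.sum_le_sum
            intro j _
            rw [abs_mul, abs_of_nonneg (hA (t+1) i j)]
            exact mul_le_mul_of_nonneg_left (heM j) (hA (t+1) i j)
        _ = (∑ j ∈ univ.erase i, A (t+1) i j) * M := (Finset.sum_mul _ _ _).symm
    have hrow' : ∑ j ∈ univ.erase i, A (t+1) i j + A (t+1) i i = 1 := by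
      rw [Finset.sum_erase_add _ _ (mem_univ i)]
      exact hrow (t+1) i
    rw [Real.norm_eq_abs, Pi.sub_apply, hcomp]
    calc |(∑ j ∈ univ.erase i, A (t+1) i j * e j) + (A (t+1) i i * e i + f (t+1) i (-(e i)))|
        ≤ |∑ j ∈ univ.erase i, A (t+1) i j * e j| + |A (t+1) i i * e i + f (t+1) i (-(e i))| :=
          abs_add_le _ _
      _ ≤ (∑ j ∈ univ.erase i, A (t+1) i j) * M + (A (t+1) i i - δ) * M := by
          exact add_le_add hsumb hgbound
      _ = (1 - δ) * M := by nlinarith [hrow']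
  have bound : ∀ t, ‖X t - fun _ => σ‖ ≤ (1 - δ) ^ t * ‖X 0 - fun _ => σ‖ := by
    intro t
    induction t with
    | zero => simp
    | succ t ih =>
      calc ‖X (t+1) - fun _ => σ‖ ≤ (1 - δ) * ‖X t - fun _ => σ‖ := key t
        _ ≤ (1 - δ) * ((1 - δ) ^ t * ‖X 0 - fun _ => σ‖) :=
            mul_le_mul_of_nonneg_left ih (by linarith)
        _ = (1 - δ) ^ (t+1) * ‖X 0 - fun _ => σ‖ := by ring
  refine ⟨bound, ?_⟩
  rw [tendsto_iff_norm_sub_tendsto_zero]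
  have h1 : Tendsto (fun t : ℕ => (1 - δ) ^ t * ‖X 0 - fun _ => σ‖) atTop (nhds 0) := by
    have := (tendsto_pow_atTop_nhds_zero_of_lt_one (by linarith : (0:ℝ) ≤ 1 - δ)
      (by linarith : (1:ℝ) - δ < 1)).mul_const ‖X 0 - fun _ => σ‖
    simpa using this
  exact squeeze_zero (fun t => norm_nonneg _) bound h1
end

section
/- Let (ρ_t)_{t≥1} be nonnegative reals with sup_t (ρ_t + ρ_tρ_{t-1} + ... + ρ_t⋯ρ_1) < ∞, let (α_t)_{t≥1} be nonnegative reals with Σ_t α_t < ∞, and let (d_t)_{t≥0} be nonnegative reals satisfying d_t ≤ ρ_t d_{t-1} + α_t for t ≥ 1. Then d_t → 0 as t → ∞. -/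
open Filter Finset

theorem stmt19 (ρ α d : ℕ → ℝ)
    (hρ : ∀ t, 0 ≤ ρ t) (hα : ∀ t, 0 ≤ α t) (hd : ∀ t, 0 ≤ d t)
    (As : ℝ)
    (hsup : ∀ t ≥ 1, ∑ k ∈ Finset.Icc 1 t, ∏ i ∈ Finset.Ioc (t - k) t, ρ i ≤ As)
    (hαsum : Summable α)
    (hrec : ∀ t ≥ 1, d t ≤ ρ t * d (t - 1) + α t) :
    Tendsto d atTop (nhds 0) := by
  set A := max As 1 with hAdef
  have hA1 : (1:ℝ) ≤ A := le_max_right _ _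
  have hA0 : (0:ℝ) < A := lt_of_lt_of_le one_pos hA1
  have hAsA : As ≤ A := le_max_left _ _
  set P : ℕ → ℕ → ℝ := fun s t => ∏ i ∈ Finset.Ioc s t, ρ i with hPdef
  have hPnn : ∀ s t, 0 ≤ P s t := fun s t => Finset.prod_nonneg (fun i _ => hρ i)
  -- each product of consecutive ρ's is one term in the hsup sum
  have hPA : ∀ s t, s < t → P s t ≤ As := by
    intro s t hst
    have h1 : 1 ≤ t := by omega
    have hs := hsup t h1
    have hmem : t - s ∈ Finset.Icc 1 t := by simp; omega
    have hterm : (∏ i ∈ Finset.Ioc (t - (t - s)) t, ρ i) ≤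
        ∑ k ∈ Finset.Icc 1 t, ∏ i ∈ Finset.Ioc (t - k) t, ρ i :=
      Finset.single_le_sum (f := fun k => ∏ i ∈ Finset.Ioc (t - k) t, ρ i)
        (fun k _ => Finset.prod_nonneg fun i _ => hρ i) hmem
    have heq : t - (t - s) = s := by omega
    rw [heq] at hterm
    exact le_trans hterm hs
  have hPA' : ∀ s t, s ≤ t → P s t ≤ A := by
    intro s t hst
    rcases eq_or_lt_of_le hst with rfl | h
    · simp only [hPdef, Finset.Ioc_self, Finset.prod_empty]; exact hA1
    · exact le_trans (hPA s t h) hAsA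
  -- unfold the recurrence
  have hrec' : ∀ s t, s ≤ t → d t ≤ P s t * d s + ∑ k ∈ Finset.Ioc s t, P k t * α k := by
    intro s t hst
    induction t with
    | zero =>
      interval_cases s
      simp [hPdef]
    | succ n ih =>
      rcases Nat.lt_or_ge s (n+1) with h | h
      · have hsn : s ≤ n := by omega
        have hn := ih hsn
        have hr := hrec (n+1) (by omega)
        simp only [Nat.add_sub_cancel] at hr
        have hPs : P s (n+1) = P s n * ρ (n+1) := Finset.prod_Ioc_succ_top hsn _
        have hsum : ∑ k ∈ Finset.Ioc s (n+1), P k (n+1) * α k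
            = (∑ k ∈ Finset.Ioc s n, (P k n * ρ (n+1)) * α k) + α (n+1) := by
          rw [Finset.sum_Ioc_succ_top hsn]
          congr 1
          · apply Finset.sum_congr rfl
            intro k hk
            rw [show P k (n+1) = P k n * ρ (n+1) from
              Finset.prod_Ioc_succ_top (Finset.mem_Ioc.1 hk).2 _]
          · simp [hPdef]
        have key : ρ (n+1) * (P s n * d s + ∑ k ∈ Finset.Ioc s n, P k n * α k) + α (n+1)
            = P s (n+1) * d s + ∑ k ∈ Finset.Ioc s (n+1), P k (n+1) * α k := by
          rw [hsum, hPs, mul_add, Finset.mul_sum]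
          rw [Finset.sum_congr rfl (fun k _ => by ring :
            ∀ k ∈ Finset.Ioc s n, ρ (n+1) * (P k n * α k) = (P k n * ρ (n+1)) * α k)]
          ring
        have hmul : ρ (n+1) * d n ≤
            ρ (n+1) * (P s n * d s + ∑ k ∈ Finset.Ioc s n, P k n * α k) :=
          mul_le_mul_of_nonneg_left hn (hρ (n+1))
        linarith [key]
      · have hs : s = n+1 := by omega
        subst hs
        simp [hPdef]
  -- decay of products: P s t ≤ A^2 / (t - s)
  have hPdecay : ∀ s t, s < t → P s t ≤ A^2 / ((t - s : ℕ) : ℝ) := by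
    intro s t hst
    set m := t - s with hm
    have hm1 : 1 ≤ m := by omega
    have hmt : m ≤ t := by omega
    have hmpos : (0:ℝ) < (m:ℝ) := by exact_mod_cast hm1
    have hsub : ∑ k ∈ Finset.Icc 1 m, P (t - k) t ≤ As := by
      refine le_trans (Finset.sum_le_sum_of_subset_of_nonneg
        (Finset.Icc_subset_Icc_right hmt) (fun k _ _ => hPnn _ _)) (hsup t (by omega))
    have hex : ∃ k ∈ Finset.Icc 1 m, P (t - k) t ≤ A / m := by
      apply Finset.exists_le_of_sum_le ⟨1, by simp; omega⟩
      have : ∑ _k ∈ Finset.Icc 1 m, A / (m:ℝ) = m * (A / m) := by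
        rw [Finset.sum_const, Nat.card_Icc]
        simp [nsmul_eq_mul]
      rw [this, mul_div_cancel₀ _ (ne_of_gt hmpos)]
      exact le_trans hsub hAsA
    obtain ⟨k, hkmem, hk⟩ := hex
    simp only [Finset.mem_Icc] at hkmem
    have h1 : s ≤ t - k := by omega
    have h2 : t - k ≤ t := by omega
    have hsplit : P s (t - k) * P (t - k) t = P s t :=
      Finset.prod_Ioc_consecutive ρ h1 h2
    have hb1 : P s (t - k) ≤ A := hPA' _ _ h1
    calc P s t = P s (t - k) * P (t - k) t := hsplit.symm
      _ ≤ A * (A / m) := by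
          apply mul_le_mul hb1 hk (hPnn _ _) (le_of_lt hA0)
      _ = A^2 / m := by ring
  -- total sum of α and tail bounds
  set S := ∑' k, α k with hS
  have hS0 : 0 ≤ S := tsum_nonneg hα
  have htail : Tendsto (fun M => ∑' k, α (k + M)) atTop (nhds 0) :=
    tendsto_sum_nat_add α
  have hsum_tail : ∀ M t : ℕ, ∑ k ∈ Finset.Ioc M t, α k ≤ ∑' k, α (k + (M+1)) := by
    intro M t
    have hsummable : Summable (fun k => α (k + (M+1))) :=
      (summable_nat_add_iff (M+1)).2 hαsum
    have : ∑ k ∈ Finset.Ioc M t, α k = ∑ j ∈ Finset.range (t + 1 - (M+1)), α (j + (M+1)) := by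
      rw [← Finset.Ico_add_one_add_one_eq_Ioc, Finset.sum_Ico_eq_sum_range]
      apply Finset.sum_congr rfl
      intro j _
      congr 1
      omega
    rw [this]
    exact hsummable.sum_le_tsum _ (fun j _ => hα _)
  -- main epsilon argument
  rw [Metric.tendsto_atTop]
  intro ε hε
  have hε3 : 0 < ε / 3 := by linarith
  -- choose M with tail small
  have hεA : 0 < ε / (3 * A) := by positivity
  obtain ⟨M, hM⟩ := (Filter.eventually_atTop.1 (htail.eventually (gt_mem_nhds hεA)))
  have hMtail : ∑' k, α (k + (M + 1)) < ε / (3 * A) := hM (M + 1) (by omega)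
  obtain ⟨N₁, hN₁⟩ := exists_nat_gt (3 * A^2 * d 0 / ε)
  obtain ⟨N₂, hN₂⟩ := exists_nat_gt (3 * A^2 * S / ε)
  refine ⟨M + N₁ + N₂ + 1, fun t ht => ?_⟩
  have hMt : M < t := by omega
  have htpos : (0:ℝ) < t := by exact_mod_cast (by omega : 0 < t)
  have htM : (0:ℝ) < ((t - M : ℕ) : ℝ) := by exact_mod_cast (by omega : 0 < t - M)
  -- bound term 1
  have hterm1 : P 0 t * d 0 < ε / 3 := by
    have h1 : P 0 t ≤ A^2 / ((t - 0 : ℕ) : ℝ) := hPdecay 0 t (by omega)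
    rw [Nat.sub_zero] at h1
    have h2 : P 0 t * d 0 ≤ A^2 / (t:ℝ) * d 0 :=
      mul_le_mul_of_nonneg_right h1 (hd 0)
    have h3 : A^2 / (t:ℝ) * d 0 < ε / 3 := by
      rw [div_mul_eq_mul_div, div_lt_iff₀ htpos]
      have ht1 : (N₁ : ℝ) < t := by exact_mod_cast (by omega : N₁ < t)
      have := lt_trans hN₁ ht1
      rw [div_lt_iff₀ hε] at this
      nlinarith
    linarith
  -- bound term 2
  have hterm2 : ∑ k ∈ Finset.Ioc 0 M, P k t * α k < ε / 3 := by
    have hbd : ∀ k ∈ Finset.Ioc 0 M, P k t * α k ≤ A^2 / ((t - M : ℕ) : ℝ) * α k := by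
      intro k hk
      simp only [Finset.mem_Ioc] at hk
      have hkt : k < t := by omega
      have h1 : P k t ≤ A^2 / ((t - k : ℕ) : ℝ) := hPdecay k t hkt
      have h2 : A^2 / ((t - k : ℕ) : ℝ) ≤ A^2 / ((t - M : ℕ) : ℝ) := by
        apply div_le_div_of_nonneg_left (by positivity) htM
        exact_mod_cast (by omega : t - M ≤ t - k)
      exact mul_le_mul_of_nonneg_right (le_trans h1 h2) (hα k)
    have h3 : ∑ k ∈ Finset.Ioc 0 M, P k t * α k
        ≤ A^2 / ((t - M : ℕ) : ℝ) * ∑ k ∈ Finset.Ioc 0 M, α k := by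
      rw [Finset.mul_sum]
      exact Finset.sum_le_sum hbd
    have h4 : ∑ k ∈ Finset.Ioc 0 M, α k ≤ S :=
      hαsum.sum_le_tsum _ (fun k _ => hα k)
    have h5 : A^2 / ((t - M : ℕ) : ℝ) * ∑ k ∈ Finset.Ioc 0 M, α k
        ≤ A^2 / ((t - M : ℕ) : ℝ) * S :=
      mul_le_mul_of_nonneg_left h4 (by positivity)
    have h6 : A^2 / ((t - M : ℕ) : ℝ) * S < ε / 3 := by
      rw [div_mul_eq_mul_div, div_lt_iff₀ htM]
      have ht2 : (N₂ : ℝ) < ((t - M : ℕ) : ℝ) := by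
        exact_mod_cast (by omega : N₂ < t - M)
      have := lt_trans hN₂ ht2
      rw [div_lt_iff₀ hε] at this
      nlinarith
    linarith
  -- bound term 3
  have hterm3 : ∑ k ∈ Finset.Ioc M t, P k t * α k < ε / 3 := by
    have hbd : ∀ k ∈ Finset.Ioc M t, P k t * α k ≤ A * α k := by
      intro k hk
      simp only [Finset.mem_Ioc] at hk
      exact mul_le_mul_of_nonneg_right (hPA' k t hk.2) (hα k)
    have h3 : ∑ k ∈ Finset.Ioc M t, P k t * α k ≤ A * ∑ k ∈ Finset.Ioc M t, α k := by
      rw [Finset.mul_sum]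
      exact Finset.sum_le_sum hbd
    have h4 : A * ∑ k ∈ Finset.Ioc M t, α k ≤ A * ∑' k, α (k + (M+1)) :=
      mul_le_mul_of_nonneg_left (hsum_tail M t) (le_of_lt hA0)
    have h5 : A * ∑' k, α (k + (M+1)) < ε / 3 := by
      have := mul_lt_mul_of_pos_left hMtail hA0
      rw [mul_div_assoc'] at this
      calc A * ∑' k, α (k + (M+1)) < A * ε / (3 * A) := this
        _ = ε / 3 := by field_simp
    linarith
  -- combine
  have hsplit : ∑ k ∈ Finset.Ioc 0 t, P k t * α k
      = ∑ k ∈ Finset.Ioc 0 M, P k t * α k + ∑ k ∈ Finset.Ioc M t, P k t * α k :=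
    (Finset.sum_Ioc_consecutive _ (by omega) (le_of_lt hMt)).symm
  have hmain := hrec' 0 t (by omega)
  rw [hsplit] at hmain
  rw [Real.dist_eq, sub_zero, abs_of_nonneg (hd t)]
  linarith
end
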